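/- arXiv:2303.04462 — 10 statements merged into one kernel-verified Lean document; each statement's English description precedes it below -/
import Mathlib

section
/- For all natural numbers n ≥ 1 and t ≥ 1, the poset Ramsey number of the t-element chain versus the Boolean lattice satisfies R(C_t, Q_n) = n + t − 1. -/
/-!
For the upper bound, embed `Q_n × C_{s+1}` into `Q_{n+s}` by `(S, j) ↦ S ∪ {n, …, n + j - 1}`.
If `Q_{n+s}` has no blue chain of `s + 1` elements, let `k(S)` be the least level `j` such that no
blue chain of `j + 1` elements lies below `(S, j)`. Then `k` is monotone, and `(S, k(S))` is red,
since otherwise it would extend the blue chain of `k(S)` elements lying below `(S, k(S) - 1)`.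
So `S ↦ (S, k(S))` is a red copy of `Q_n`. For the lower bound, colour the sets of `Q_{n+s-1}`
with fewer than `s` elements blue: a blue chain has at most `s` elements, and a red copy of `Q_n`
would need a set of size `s + n`.
-/

/-- The poset Ramsey number `R(P₁, P₂)`: the least `N` such that every blue/red coloring
(`true` = blue, `false` = red) of the Boolean lattice `Q_N` (all subsets of an `N`-element
set, ordered by inclusion) contains a blue (induced) copy of `P₁` or a red (induced) copy
of `P₂`. -/
noncomputable def posetRamsey (P₁ : Type*) (P₂ : Type*) [PartialOrder P₁] [PartialOrder P₂] : ℕ :=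
  sInf {N : ℕ | ∀ c : Finset (Fin N) → Bool,
    (∃ f : P₁ ↪o Finset (Fin N), ∀ x, c (f x) = true) ∨
    (∃ f : P₂ ↪o Finset (Fin N), ∀ x, c (f x) = false)}

open Finset

section BlueChain

variable {α : Type*} [Preorder α] (c : α → Bool)

def HasBlueChainBelow (m : ℕ) (X : α) : Prop :=
  ∃ f : Fin m → α, StrictMono f ∧ (∀ i, c (f i) = true) ∧ ∀ i, f i ≤ X

variable {c}

theorem HasBlueChainBelow.mono {m : ℕ} {X Y : α} (h : HasBlueChainBelow c m X) (hXY : X ≤ Y) :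
    HasBlueChainBelow c m Y :=
  let ⟨f, hf, hblue, hle⟩ := h
  ⟨f, hf, hblue, fun i => (hle i).trans hXY⟩

theorem hasBlueChainBelow_one {X : α} (hX : c X = true) : HasBlueChainBelow c 1 X :=
  ⟨fun _ => X, Subsingleton.strictMono _, fun _ => hX, fun _ => le_rfl⟩

theorem HasBlueChainBelow.snoc {m : ℕ} {X Y : α} (h : HasBlueChainBelow c (m + 1) Y)
    (hYX : Y < X) (hX : c X = true) : HasBlueChainBelow c (m + 2) X := by
  obtain ⟨f, hf, hblue, hle⟩ := h
  refine ⟨Fin.snoc (α := fun _ => α) f X, ?_, Fin.lastCases ?_ fun i => ?_,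
    Fin.lastCases ?_ fun i => ?_⟩
  · simpa [Fin.insertNth_last'] using
      Fin.strictMono_insertNth_last hf X ((hle _).trans_lt hYX)
  · simpa using hX
  · simpa using hblue i
  · simp
  · simpa using (hle i).trans hYX.le

end BlueChain

def PosetArrows (P₁ P₂ : Type*) [PartialOrder P₁] [PartialOrder P₂] (N : ℕ) : Prop :=
  ∀ c : Finset (Fin N) → Bool,
    (∃ f : P₁ ↪o Finset (Fin N), ∀ x, c (f x) = true) ∨
    (∃ f : P₂ ↪o Finset (Fin N), ∀ x, c (f x) = false)

namespace ChainCube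

variable {n s : ℕ}

open Classical in
noncomputable def lift (s : ℕ) (S : Finset (Fin n)) (j : ℕ) : Finset (Fin (n + s)) :=
  {x | Fin.addCases (motive := fun _ => Prop) (· ∈ S) (fun i => (i : ℕ) < j) x}

@[simp]
theorem castAdd_mem_lift {S : Finset (Fin n)} {j : ℕ} {x : Fin n} :
    Fin.castAdd s x ∈ lift s S j ↔ x ∈ S := by
  simp [lift]

@[simp]
theorem natAdd_mem_lift {S : Finset (Fin n)} {j : ℕ} {i : Fin s} :
    Fin.natAdd n i ∈ lift s S j ↔ (i : ℕ) < j := by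
  simp [lift]

theorem lift_mono {S T : Finset (Fin n)} {i j : ℕ} (hST : S ⊆ T) (hij : i ≤ j) :
    lift s S i ⊆ lift s T j := by
  intro x
  induction x using Fin.addCases with
  | left x => simpa using @hST x
  | right x => simpa using fun h => h.trans_le hij

theorem lift_ssubset_lift_succ {S : Finset (Fin n)} {j : ℕ} (hj : j < s) :
    lift s S j ⊂ lift s S (j + 1) :=
  (ssubset_iff_of_subset (lift_mono subset_rfl j.le_succ)).2
    ⟨Fin.natAdd n ⟨j, hj⟩, natAdd_mem_lift.2 j.lt_succ_self,
      fun h => (natAdd_mem_lift.1 h).false⟩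

variable (c : Finset (Fin (n + s)) → Bool)

noncomputable def redLevel (S : Finset (Fin n)) : ℕ :=
  sInf {j | ¬ HasBlueChainBelow c (j + 1) (lift s S j)}

variable {c} (hb : ∀ X, ¬ HasBlueChainBelow c (s + 1) X)
include hb

theorem not_hasBlueChainBelow_redLevel (S : Finset (Fin n)) :
    ¬ HasBlueChainBelow c (redLevel c S + 1) (lift s S (redLevel c S)) :=
  Nat.sInf_mem (s := {j | ¬ HasBlueChainBelow c (j + 1) (lift s S j)}) ⟨s, hb _⟩

theorem redLevel_le (S : Finset (Fin n)) : redLevel c S ≤ s :=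
  Nat.sInf_le (hb _)

theorem redLevel_mono {S T : Finset (Fin n)} (hST : S ⊆ T) : redLevel c S ≤ redLevel c T :=
  Nat.sInf_le fun h =>
    not_hasBlueChainBelow_redLevel hb T (h.mono (lift_mono hST le_rfl))

theorem color_lift_redLevel (S : Finset (Fin n)) : c (lift s S (redLevel c S)) = false := by
  rw [← Bool.not_eq_true]
  intro hblue
  apply not_hasBlueChainBelow_redLevel hb S
  obtain h0 | ⟨j, hj⟩ : redLevel c S = 0 ∨ ∃ j, redLevel c S = j + 1 := by
    cases redLevel c S <;> simp
  · rw [h0] at hblue ⊢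
    exact hasBlueChainBelow_one hblue
  · have hbelow : HasBlueChainBelow c (j + 1) (lift s S j) :=
      not_not.1 (Nat.notMem_of_lt_sInf (by omega : j < redLevel c S))
    rw [hj] at hblue ⊢
    exact hbelow.snoc (lift_ssubset_lift_succ (by have := redLevel_le hb S; omega)) hblue

end ChainCube

open ChainCube in
theorem posetArrows_chain_cube (n s : ℕ) : PosetArrows (Fin (s + 1)) (Finset (Fin n)) (n + s) := by
  intro c
  refine or_iff_not_imp_left.2 fun hblue => ?_
  have hb : ∀ X, ¬ HasBlueChainBelow c (s + 1) X := fun X ⟨f, hf, hf_blue, _⟩ =>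
    hblue ⟨OrderEmbedding.ofStrictMono f hf, hf_blue⟩
  refine ⟨OrderEmbedding.ofMapLEIff (fun S => lift s S (redLevel c S)) fun S T => ?_,
    color_lift_redLevel hb⟩
  refine ⟨fun h x hx => castAdd_mem_lift.1 (h (castAdd_mem_lift.2 hx)), fun hST => ?_⟩
  exact lift_mono hST (redLevel_mono hb hST)

theorem card_add_card_le_card_of_strictMono {α β : Type*} [DecidableEq α]
    {f : Finset α → Finset β} (hf : StrictMono f) (X : Finset α) : #(f ∅) + #X ≤ #(f X) := by
  induction X using Finset.induction_on with
  | empty => simp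
  | insert a X ha ih =>
    rw [card_insert_of_notMem ha, ← add_assoc]
    exact ih.trans_lt (card_strictMono (hf (ssubset_insert ha)))

theorem not_posetArrows_chain_cube {n s m : ℕ} (hm : m < n + s) :
    ¬ PosetArrows (Fin (s + 1)) (Finset (Fin n)) m := by
  intro h
  rcases h fun A => decide (#A < s) with ⟨f, hf⟩ | ⟨f, hf⟩
  · have hinj : Function.Injective fun i => (⟨#(f i), by simpa using hf i⟩ : Fin s) :=
      fun i j hij => (card_strictMono.comp f.strictMono).injective (congrArg Fin.val hij)
    simpa using Fintype.card_le_of_injective _ hinj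
  · have hempty : s ≤ #(f ∅) := by simpa using hf ∅
    have := card_add_card_le_card_of_strictMono f.strictMono univ
    have := card_le_univ (f univ)
    simp only [card_univ, Fintype.card_fin] at *
    omega

theorem chain_vs_cube_ramsey_general (n t : ℕ) (ht : 1 ≤ t) :
    posetRamsey (Fin t) (Finset (Fin n)) = n + t - 1 := by
  obtain ⟨s, rfl⟩ : ∃ s, t = s + 1 := ⟨t - 1, by omega⟩
  rw [← add_assoc, Nat.add_sub_cancel]
  exact IsLeast.csInf_eq ⟨posetArrows_chain_cube n s,
    fun m hm => not_lt.1 fun hlt => not_posetArrows_chain_cube hlt hm⟩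

/-- `R(C_t, Q_n) = n + t - 1`, where `C_t` is the `t`-element chain (here `Fin t`). -/
theorem chain_vs_cube_ramsey (n t : ℕ) (hn : 1 ≤ n) (ht : 1 ≤ t) :
    posetRamsey (Fin t) (Finset (Fin n)) = n + t - 1 :=
  chain_vs_cube_ramsey_general n t ht
end

section
/- For all natural numbers n ≥ 1, t and t′ with t − 1 ≥ t′ ≥ 1, the poset Ramsey number of the chain composition C_{t,t−1,t′} versus the Boolean lattice satisfies R(C_{t,t−1,t′}, Q_n) = n + t + 2. -/
open Finset

namespace Finset

variable {β : Type*} {S T : Finset β} {a : β}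

theorem subset_of_card_le_one_of_mem (hS : #S ≤ 1) (ha : a ∈ S) (haT : a ∈ T) : S ⊆ T :=
  fun _ hb => card_le_one.mp hS a ha _ hb ▸ haT

theorem subset_of_card_add_one_ge_of_notMem [Fintype β] (hS : Fintype.card β ≤ #S + 1)
    (ha : a ∉ S) (haT : a ∉ T) : T ⊆ S := by
  classical
  rw [← compl_subset_compl]
  refine subset_of_card_le_one_of_mem ?_ (mem_compl.2 ha) (mem_compl.2 haT)
  rw [card_compl]
  omega

end Finset

theorem StrictMono.apply_empty_add_card_le {α : Type*} {g : Finset α → ℕ} (hg : StrictMono g)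
    (S : Finset α) : g ∅ + #S ≤ g S := by
  classical
  induction S using Finset.induction_on with
  | empty => simp
  | insert a S ha ih =>
    rw [card_insert_of_notMem ha]
    have := hg (ssubset_insert ha)
    omega

theorem StrictMono.apply_add_sub_le {r : ℕ} {g : Fin r → ℕ} (hg : StrictMono g) {i j : Fin r}
    (hij : i ≤ j) : g i + (j - i : ℕ) ≤ g j := by
  have hcard := card_le_card (show (Icc i j).image g ⊆ Icc (g i) (g j) by
    intro y
    simp only [mem_image, mem_Icc]
    rintro ⟨a, ⟨hia, haj⟩, rfl⟩
    exact ⟨hg.monotone hia, hg.monotone haj⟩)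
  rw [card_image_of_injective _ hg.injective, Fin.card_Icc, Nat.card_Icc] at hcard
  have := hg.monotone hij
  omega

namespace OrderEmbedding

variable {A β : Type*} [Preorder A] {F : A ↪o Finset β} {p q : A}

theorem nonempty_of_not_le (h : ¬ p ≤ q) : (F p).Nonempty :=
  nonempty_iff_ne_empty.2 fun he => h (F.le_iff_le.1 (he ▸ empty_subset _))

theorem exists_notMem_of_not_le (h : ¬ q ≤ p) : ∃ x, x ∉ F p := by
  by_contra! hp
  exact h (F.le_iff_le.1 fun x _ => hp x)

end OrderEmbedding

namespace PosetRamsey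

def Arrows (Q A B : Type*) [LE Q] [LE A] [LE B] : Prop :=
  ∀ c : Q → Bool,
    (∃ f : A ↪o Q, ∀ x, c (f x) = true) ∨ (∃ f : B ↪o Q, ∀ x, c (f x) = false)

section Arrows

variable {Q Q' A A' B : Type*} [LE Q] [LE Q'] [LE A] [LE A'] [LE B]

theorem Arrows.of_host_embedding (h : Arrows Q A B) (e : Q ↪o Q') : Arrows Q' A B := by
  intro c
  rcases h (c ∘ e) with ⟨f, hf⟩ | ⟨f, hf⟩
  exacts [Or.inl ⟨f.trans e, hf⟩, Or.inr ⟨f.trans e, hf⟩]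

theorem Arrows.of_blue_embedding (h : Arrows Q A' B) (g : A ↪o A') : Arrows Q A B := by
  intro c
  rcases h c with ⟨f, hf⟩ | hred
  exacts [Or.inl ⟨g.trans f, fun x => hf (g x)⟩, Or.inr hred]

theorem Arrows.sum (h : Arrows Q A B) (h' : Arrows Q' A' B) : Arrows (Q ⊕ Q') (A ⊕ A') B := by
  intro c
  rcases h (c ∘ Sum.inl) with ⟨f, hf⟩ | ⟨f, hf⟩
  · rcases h' (c ∘ Sum.inr) with ⟨f', hf'⟩ | ⟨f', hf'⟩
    · exact Or.inl ⟨RelEmbedding.sumLiftRelMap f f', by rintro (x | x); exacts [hf x, hf' x]⟩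
    · exact Or.inr ⟨f'.trans (RelEmbedding.sumLiftRelInr _ _), hf'⟩
  · exact Or.inr ⟨f.trans (RelEmbedding.sumLiftRelInl _ _), hf⟩

theorem Arrows.finset_of_card_le {β γ : Type*} [Fintype β] [Fintype γ]
    (h : Arrows (Finset β) A B) (hc : Fintype.card β ≤ Fintype.card γ) :
    Arrows (Finset γ) A B :=
  h.of_host_embedding (mapEmbedding (Function.Embedding.nonempty_of_card_le hc).some)

end Arrows

theorem posetRamsey_eq_succ {A B : Type*} [PartialOrder A] [PartialOrder B] {N : ℕ}
    (h : Arrows (Finset (Fin (N + 1))) A B) (h' : ¬ Arrows (Finset (Fin N)) A B) :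
    posetRamsey A B = N + 1 := by
  refine le_antisymm (Nat.sInf_le h) (le_csInf ⟨_, h⟩ fun M hM => ?_)
  by_contra! hlt
  exact h' (Arrows.finset_of_card_le hM (by simpa using Nat.le_of_lt_succ hlt))

section Chain

variable {Q : Type*} [Preorder Q]

/-- The chain has `ℓ + 1` elements. -/
def HasBlueChainBelow (c : Q → Bool) (x : Q) (ℓ : ℕ) : Prop :=
  ∃ s : LTSeries Q, s.length = ℓ ∧ s.last ≤ x ∧ ∀ y ∈ s, c y = true

variable {c : Q → Bool} {x y : Q} {ℓ : ℕ}

theorem hasBlueChainBelow_zero (hx : c x = true) : HasBlueChainBelow c x 0 :=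
  ⟨RelSeries.singleton _ x, rfl, le_rfl, by rintro y ⟨i, rfl⟩; exact hx⟩

theorem HasBlueChainBelow.mono (h : HasBlueChainBelow c x ℓ) (hxy : x ≤ y) :
    HasBlueChainBelow c y ℓ :=
  let ⟨s, hs, hlast, hblue⟩ := h
  ⟨s, hs, hlast.trans hxy, hblue⟩

theorem HasBlueChainBelow.snoc (h : HasBlueChainBelow c x ℓ) (hxy : x < y) (hy : c y = true) :
    HasBlueChainBelow c y (ℓ + 1) := by
  obtain ⟨s, rfl, hlast, hblue⟩ := h
  refine ⟨s.snoc y (hlast.trans_lt hxy), rfl, by simp, fun z hz => ?_⟩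
  rcases RelSeries.mem_snoc.mp hz with hz | rfl
  exacts [hblue z hz, hy]

theorem exists_orderEmbedding_of_hasBlueChainBelow (h : HasBlueChainBelow c x ℓ) :
    ∃ f : Fin (ℓ + 1) ↪o Q, ∀ i, c (f i) = true := by
  obtain ⟨s, rfl, -, hblue⟩ := h
  exact ⟨OrderEmbedding.ofStrictMono s s.strictMono, fun i => hblue _ ⟨i, rfl⟩⟩

end Chain

theorem hasBlueChainBelow_of_forall_lt {P : Type*} [Preorder P] {k : ℕ}
    {c : P × Fin (k + 1) → Bool} {p : P} {j : Fin (k + 1)}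
    (h : ∀ i < j, HasBlueChainBelow c (p, i) i) (hj : c (p, j) = true) :
    HasBlueChainBelow c (p, j) j := by
  cases j using Fin.cases with
  | zero => exact hasBlueChainBelow_zero hj
  | succ i =>
    exact (h _ i.castSucc_lt_succ).snoc (Prod.mk_lt_mk_iff_right.mpr i.castSucc_lt_succ) hj

theorem arrows_prod_fin (P : Type*) [PartialOrder P] (k : ℕ) :
    Arrows (P × Fin (k + 1)) (Fin (k + 1)) P := by
  classical
  intro c
  by_cases hchain : ∃ x, HasBlueChainBelow c x k
  · obtain ⟨x, hx⟩ := hchain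
    exact Or.inl (exists_orderEmbedding_of_hasBlueChainBelow hx)
  push Not at hchain
  let free (p : P) : Finset (Fin (k + 1)) := {j | ¬ HasBlueChainBelow c (p, j) j}
  have free_nonempty (p : P) : (free p).Nonempty := ⟨Fin.last k, by simpa [free] using hchain _⟩
  let level (p : P) : Fin (k + 1) := (free p).min' (free_nonempty p)
  have level_mono : Monotone level := fun p q hpq => by
    refine min'_subset _ (fun j hj => ?_)
    simp only [free, mem_filter, mem_univ, true_and] at hj ⊢
    exact fun h => hj (h.mono (Prod.mk_le_mk.mpr ⟨hpq, le_rfl⟩))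
  have level_red (p : P) : c (p, level p) = false := by
    by_contra hblue
    have hlevel := min'_mem (free p) (free_nonempty p)
    simp only [free, mem_filter, mem_univ, true_and] at hlevel
    refine hlevel (hasBlueChainBelow_of_forall_lt (fun i hi => ?_) (by simpa using hblue))
    have : i ∉ free p := fun hmem => (min'_le _ _ hmem).not_gt hi
    simpa [free] using this
  refine Or.inr ⟨OrderEmbedding.ofMapLEIff (fun p => (p, level p)) fun p q => ?_, level_red⟩
  exact ⟨fun h => h.1, fun h => ⟨h, level_mono h⟩⟩

def initialSegments (k : ℕ) : Fin (k + 1) ↪o Finset (Fin k) :=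
  OrderEmbedding.ofStrictMono (fun j => ({i | i.castSucc < j} : Finset (Fin k))) fun i j hij => by
    refine (ssubset_iff_of_subset fun x hx => ?_).mpr ⟨i.castLT (hij.trans_le j.le_last), ?_⟩
    · simp only [mem_filter, mem_univ, true_and] at hx ⊢
      exact hx.trans hij
    · simpa using hij

def prodFinEmbedding (α : Type*) (k : ℕ) : Finset α × Fin (k + 1) ↪o Finset (α ⊕ Fin k) :=
  OrderEmbedding.ofMapLEIff (fun p => p.1.disjSum (initialSegments k p.2)) fun p q => by
    simp [subset_disjSum, Prod.le_def]

def threeCopies (P : Type*) [PartialOrder P] : P ⊕ P ⊕ P ↪o Finset (Fin 3) × P :=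
  OrderEmbedding.ofMapLEIff (Sum.elim (fun x => (({0} : Finset (Fin 3)), x))
    (Sum.elim (fun x => ({1}, x)) fun x => ({2}, x))) (by
      rintro (a | a | a) (b | b | b) <;> simp [Prod.mk_le_mk])

theorem arrows_three_chains {α β : Type*} [Fintype α] [Fintype β] (k : ℕ)
    (hβ : Fintype.card α + k + 3 ≤ Fintype.card β) :
    Arrows (Finset β) (Fin (k + 1) ⊕ Fin (k + 1) ⊕ Fin (k + 1)) (Finset α) := by
  have hcube := (arrows_prod_fin (Finset α) k).of_host_embedding (prodFinEmbedding α k)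
  refine ((hcube.sum (hcube.sum hcube)).of_host_embedding
    ((threeCopies _).trans sumEquiv.symm.toOrderEmbedding)).finset_of_card_le ?_
  simp only [Fintype.card_sum, Fintype.card_fin]
  omega

section Layers

variable {α β : Type*} [Fintype β] {m : ℕ}

def layerColoring (β : Type*) [Fintype β] (m : ℕ) (S : Finset β) : Bool :=
  decide (#S ≤ m ∨ Fintype.card β ≤ #S + 1)

theorem exists_blue_of_cube [Fintype α] (hβ : Fintype.card β ≤ Fintype.card α + m + 2)
    (f : Finset α ↪o Finset β) : ∃ S, layerColoring β m (f S) = true := by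
  by_contra! hred
  simp only [layerColoring, Bool.not_eq_true, decide_eq_false_iff_not, not_or, not_le] at hred
  have := (card_strictMono.comp f.strictMono).apply_empty_add_card_le univ
  simp only [Function.comp_apply, card_univ] at this
  have := (hred ∅).1
  have := (hred univ).2
  omega

theorem exists_notMem_mem_of_chain {D : Type*} [Preorder D] (hm : 1 ≤ m) (d : D)
    (F : Fin (m + 1) ⊕ D ↪o Finset β) (hF : ∀ p, layerColoring β m (F p) = true) :
    ∃ a x, ∀ q, a ∉ F (.inr q) ∧ x ∈ F (.inr q) := by
  simp only [layerColoring, decide_eq_true_eq] at hF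
  have hA : StrictMono fun i => #(F (.inl i)) :=
    card_strictMono.comp (F.strictMono.comp fun _ _ => Sum.inl_lt_inl_iff.2)
  obtain ⟨k, rfl⟩ : ∃ k, m = k + 1 := ⟨m - 1, by omega⟩
  obtain ⟨a, ha⟩ := F.nonempty_of_not_le (p := .inl 0) (q := .inr d) Sum.not_inl_le_inr
  have htop : #(F (.inl 0)) + (k + 1) ≤ #(F (.inl (Fin.last (k + 1)))) := by
    simpa using hA.apply_add_sub_le (Fin.zero_le (Fin.last (k + 1)))
  have hsub : #(F (.inl 0)) + k ≤ #(F (.inl (Fin.last k).castSucc)) := by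
    simpa using hA.apply_add_sub_le (Fin.zero_le (Fin.last k).castSucc)
  have hsub_top : #(F (.inl (Fin.last k).castSucc)) < #(F (.inl (Fin.last (k + 1)))) :=
    hA (Fin.castSucc_lt_last _)
  have ha1 := Finset.card_pos.2 ⟨a, ha⟩
  obtain ⟨x, hx⟩ := F.exists_notMem_of_not_le (p := .inl (Fin.last (k + 1))) (q := .inr d)
    Sum.not_inr_le_inl
  have htop_lt := card_lt_univ_of_notMem hx
  have htop_big := (hF (.inl (Fin.last (k + 1)))).resolve_left (by omega)
  have hsub_small := (hF (.inl (Fin.last k).castSucc)).resolve_right (by omega)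
  refine ⟨a, x, fun q => ⟨fun haq => ?_, by_contra fun hxq => ?_⟩⟩
  · exact Sum.not_inl_le_inr (F.le_iff_le.1 (subset_of_card_le_one_of_mem (by omega) ha haq))
  · exact Sum.not_inr_le_inl <|
      F.le_iff_le.1 (subset_of_card_add_one_ge_of_notMem htop_big hx hxq)

theorem exists_red_of_three_chains {C : Type*} [Preorder C] (hm : 1 ≤ m) (z : C)
    (F : Fin (m + 1) ⊕ Fin m ⊕ C ↪o Finset β) : ∃ p, layerColoring β m (F p) = false := by
  by_contra! hblue
  simp only [ne_eq, Bool.not_eq_false] at hblue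
  obtain ⟨a, x, hax⟩ := exists_notMem_mem_of_chain hm (.inr z) F hblue
  simp only [layerColoring, decide_eq_true_eq] at hblue
  have hB : StrictMono fun j => #(F (.inr (.inl j))) :=
    card_strictMono.comp <|
      F.strictMono.comp fun _ _ h => Sum.inr_lt_inr_iff.2 (Sum.inl_lt_inl_iff.2 h)
  have hB_small (j : Fin m) : #(F (.inr (.inl j))) ≤ m := by
    refine (hblue _).resolve_right fun hbig => ?_
    have := subset_of_card_add_one_ge_of_notMem hbig (hax (.inl j)).1 (hax (.inr z)).1
    simpa using F.le_iff_le.1 this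
  obtain ⟨k, rfl⟩ : ∃ k, m = k + 1 := ⟨m - 1, by omega⟩
  have hB_bottom : #(F (.inr (.inl 0))) + k ≤ #(F (.inr (.inl (Fin.last k)))) := by
    simpa using hB.apply_add_sub_le (Fin.zero_le (Fin.last k))
  have := hB_small (Fin.last k)
  have := subset_of_card_le_one_of_mem (by omega) (hax (.inl 0)).2 (hax (.inr z)).2
  simpa using F.le_iff_le.1 this

theorem not_arrows_three_chains [Fintype α] {C : Type*} [Preorder C] [Nonempty C] (hm : 1 ≤ m)
    (hβ : Fintype.card β ≤ Fintype.card α + m + 2) :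
    ¬ Arrows (Finset β) (Fin (m + 1) ⊕ Fin m ⊕ C) (Finset α) := by
  intro h
  rcases h (layerColoring β m) with ⟨F, hF⟩ | ⟨f, hf⟩
  · obtain ⟨p, hp⟩ := exists_red_of_three_chains hm (Classical.arbitrary C) F
    simp [hF p] at hp
  · obtain ⟨S, hS⟩ := exists_blue_of_cube hβ f
    simp [hf S] at hS

end Layers

end PosetRamsey

open PosetRamsey

theorem three_chain_composition_vs_cube_ramsey_general (n t t' : ℕ)
    (ht' : 1 ≤ t') (ht : t' ≤ t - 1) :
    posetRamsey (Fin t ⊕ Fin (t - 1) ⊕ Fin t') (Finset (Fin n)) = n + t + 2 := by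
  obtain ⟨m, rfl⟩ : ∃ m, t = m + 1 := ⟨t - 1, by omega⟩
  rw [Nat.add_sub_cancel] at ht ⊢
  have : Nonempty (Fin t') := ⟨⟨0, ht'⟩⟩
  have upper :
      Arrows (Finset (Fin (n + m + 3))) (Fin (m + 1) ⊕ Fin m ⊕ Fin t') (Finset (Fin n)) :=
    (arrows_three_chains m (by simp)).of_blue_embedding <| RelEmbedding.sumLiftRelMap
      (Fin.castLEOrderEmb le_rfl)
      (RelEmbedding.sumLiftRelMap (Fin.castLEOrderEmb (by omega)) (Fin.castLEOrderEmb (by omega)))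
  exact posetRamsey_eq_succ upper
    (not_arrows_three_chains (ht'.trans ht) (by simp only [Fintype.card_fin]; omega))

/-- `R(C_{t,t-1,t'}, Q_n) = n + t + 2`: the chain composition of three parallel chains
with `t`, `t-1` and `t'` elements (where `t - 1 ≥ t' ≥ 1`) versus the Boolean lattice. -/
theorem three_chain_composition_vs_cube_ramsey (n t t' : ℕ) (hn : 1 ≤ n)
    (ht' : 1 ≤ t') (ht : t' ≤ t - 1) :
    posetRamsey (Fin t ⊕ Fin (t - 1) ⊕ Fin t') (Finset (Fin n)) = n + t + 2 :=
  three_chain_composition_vs_cube_ramsey_general n t t' ht' ht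
end

section
/- Let s, t ≥ 1 be fixed natural numbers. For every real ε > 0 there exists n₀ such that for all n ≥ n₀, the poset Ramsey number of the (s,t)-subdivided diamond versus the Boolean lattice satisfies R(SD_{s,t}, Q_n) ≤ n + (2 + ε)·n/log₂ n. -/
/-- The `(s,t)`-subdivided diamond: two parallel chains with `s` and `t` elements,
together with a common minimum and a common maximum. -/
abbrev SubdividedDiamond (s t : ℕ) : Type := WithBot (WithTop (Fin s ⊕ Fin t))

/-!
Write `Q_{n+m}` as `Q(X) × Q(Y)` with `|X| = n`, `|Y| = m`, and fix a coloring without a red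
copy of `Q(X)`. For every linear order `σ` of `Y`, the greedy embedding of `Q(X)` into red
elements of the form `(S, first v elements of σ)` gets stuck, and it leaves behind a blue chain
`(T_v, first v elements of σ)`, `v = 0, …, m`, with `T_0 ⊆ ⋯ ⊆ T_m`. Since there are `4^n`
possible pairs `(T_0, T_m)`, more than `(4k+1)^m` of the `m!` orders share them once
`4^n (4k+1)^m < m!`, where `k = max s t`. At most `(4k+1)^m` orders move no element by more than
`2k` positions compared to a fixed one, so two orders `σ, τ` of the class contain `x, y` with
`x` at least `k` positions before `y` in `σ` and `y` at least `k` positions before `x` in `τ`.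
The pieces of the two blue chains just above `x` in `σ` and just above `y` in `τ` are then
incomparable, and with the common bottom `(T_0, ∅)` and top `(T_m, Y)` they form a blue
`SD_{s,t}`. Finally `m! ≥ (m / e)^m` shows that `4^n (4k+1)^m < m!` for some
`m ≤ (2 + ε) n / log₂ n` once `n` is large.
-/

open Finset
open scoped Nat

namespace OrderEmbedding

variable {α β γ : Type*}

def withBotElim [PartialOrder α] [Preorder β] (f : α ↪o β) (b : β) (hb : ∀ a, b < f a) :
    WithBot α ↪o β :=
  ofMapLEIff (WithBot.recBotCoe b f) fun x y ↦ by
    induction x using WithBot.recBotCoe <;> induction y using WithBot.recBotCoe <;>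
      simp [(hb _).le, (hb _).not_ge]

def withTopElim [PartialOrder α] [Preorder β] (f : α ↪o β) (t : β) (ht : ∀ a, f a < t) :
    WithTop α ↪o β :=
  ofMapLEIff (WithTop.recTopCoe t f) fun x y ↦ by
    induction x using WithTop.recTopCoe <;> induction y using WithTop.recTopCoe <;>
      simp [(ht _).le, (ht _).not_ge]

def sumElim [PartialOrder α] [PartialOrder β] [Preorder γ] (f : α ↪o γ) (g : β ↪o γ)
    (hfg : ∀ a b, ¬ f a ≤ g b) (hgf : ∀ a b, ¬ g b ≤ f a) : α ⊕ β ↪o γ :=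
  ofMapLEIff (Sum.elim f g) (by rintro (a | b) (a' | b') <;> simp [hfg, hgf])

end OrderEmbedding

namespace SubdividedDiamond

variable {s t : ℕ} {α : Type*} [PartialOrder α]

def orderEmbedding (bot top : α) (A : Fin s ↪o α) (B : Fin t ↪o α) (hbot : bot < top)
    (hA : ∀ i, bot < A i ∧ A i < top) (hB : ∀ j, bot < B j ∧ B j < top)
    (hAB : ∀ i j, ¬ A i ≤ B j) (hBA : ∀ i j, ¬ B j ≤ A i) : SubdividedDiamond s t ↪o α :=
  ((A.sumElim B hAB hBA).withTopElim top
      (by rintro (i | j); exacts [(hA i).2, (hB j).2])).withBotElim bot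
    (by rintro (_ | i | j); exacts [hbot, (hA i).1, (hB j).1])

theorem forall_orderEmbedding_apply {bot top : α} {A : Fin s ↪o α} {B : Fin t ↪o α}
    {hbot hA hB hAB hBA} (p : α → Prop) (pbot : p bot) (ptop : p top) (pA : ∀ i, p (A i))
    (pB : ∀ j, p (B j)) : ∀ z, p (orderEmbedding bot top A B hbot hA hB hAB hBA z) := by
  rintro (_ | _ | i | j); exacts [pbot, ptop, pA i, pB j]

end SubdividedDiamond

theorem posetRamsey_le_of_orderEmbedding {P₁ P₂ H : Type*} [PartialOrder P₁] [PartialOrder P₂]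
    [PartialOrder H] {N : ℕ} (e : H ↪o Finset (Fin N))
    (h : ∀ c : H → Bool, (∃ f : P₁ ↪o H, ∀ x, c (f x) = true) ∨
      ∃ f : P₂ ↪o H, ∀ x, c (f x) = false) :
    posetRamsey P₁ P₂ ≤ N :=
  Nat.sInf_le fun c ↦
    (h (c ∘ e)).imp (fun ⟨f, hf⟩ ↦ ⟨f.trans e, hf⟩) fun ⟨f, hf⟩ ↦ ⟨f.trans e, hf⟩

namespace PosetRamsey

variable {m : ℕ}

/-- `σ j` is the position of `j` in a linear order of `Fin m`; for `v ≤ m` the sets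
`prefixSet σ v` form the corresponding maximal chain of `Q(Fin m)`. -/
def prefixSet (σ : Equiv.Perm (Fin m)) (v : ℕ) : Finset (Fin m) := {j | (σ j : ℕ) < v}

section PrefixSet

variable {σ : Equiv.Perm (Fin m)} {v : ℕ}

@[simp]
theorem mem_prefixSet {j : Fin m} : j ∈ prefixSet σ v ↔ (σ j : ℕ) < v := by
  simp [prefixSet]

theorem prefixSet_zero : prefixSet σ 0 = ∅ := by
  ext; simp

theorem prefixSet_of_le (h : m ≤ v) : prefixSet σ v = univ := by
  ext j; simpa using (σ j).isLt.trans_le h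

theorem prefixSet_mono : Monotone (prefixSet σ) :=
  fun _ _ h _ ↦ by simpa using fun hj ↦ hj.trans_le h

theorem prefixSet_strictMonoOn : StrictMonoOn (prefixSet σ) (Set.Iic m) := by
  intro v _ w hw hvw
  refine (prefixSet_mono hvw.le).ssubset_of_not_subset fun h ↦ ?_
  have := @h (σ.symm ⟨v, hvw.trans_le hw⟩) (by simpa using hvw)
  simp at this

theorem card_prefixSet : #(prefixSet σ v) = min m v := by
  rw [← Fin.card_filter_val_lt]
  exact card_equiv σ (by simp)

end PrefixSet

section Greedy

variable {X : Type*} (c : Finset X × Finset (Fin m) → Bool)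

def IsBlueChain (σ : Equiv.Perm (Fin m)) (T : ℕ → Finset X) : Prop :=
  Monotone T ∧ ∀ v ≤ m, c (T v, prefixSet σ v) = true

variable [DecidableEq X] (σ : Equiv.Perm (Fin m))

/-- The greedy embedding `S ↦ (S, prefixSet σ (greedyLevel c σ S))` of `Q(X)` into red
elements; a level `> m` means that it is stuck at `S`. -/
def greedyLevel (S : Finset X) : ℕ :=
  Nat.find (p := fun v ↦ (S.ssubsets.attach.sup fun T ↦ greedyLevel T.1) ≤ v ∧
      (m < v ∨ c (S, prefixSet σ v) = false))
    ⟨max (S.ssubsets.attach.sup fun T ↦ greedyLevel T.1) (m + 1), le_max_left ..,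
      .inl (Nat.lt_succ_self m |>.trans_le (le_max_right ..))⟩
termination_by #S
decreasing_by all_goals exact card_lt_card (mem_ssubsets.1 T.2)

def greedyFloor (S : Finset X) : ℕ := S.ssubsets.attach.sup fun T ↦ greedyLevel c σ T.1

variable {c σ} {S T : Finset X} {v : ℕ}

theorem greedyLevel_spec : greedyFloor c σ S ≤ greedyLevel c σ S ∧
    (m < greedyLevel c σ S ∨ c (S, prefixSet σ (greedyLevel c σ S)) = false) := by
  rw [greedyLevel]
  exact Nat.find_spec (p := fun v ↦ greedyFloor c σ S ≤ v ∧
    (m < v ∨ c (S, prefixSet σ v) = false)) _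

theorem blue_of_greedyFloor_le_of_lt_greedyLevel (h₁ : greedyFloor c σ S ≤ v)
    (h₂ : v < greedyLevel c σ S) : c (S, prefixSet σ v) = true := by
  rw [greedyLevel] at h₂
  have := Nat.find_min _ h₂
  simp_all [greedyFloor]

theorem greedyLevel_le_greedyFloor (h : T ⊂ S) : greedyLevel c σ T ≤ greedyFloor c σ S :=
  le_sup (f := fun T : S.ssubsets ↦ greedyLevel c σ T.1) (mem_attach _ ⟨T, mem_ssubsets.2 h⟩)

theorem greedyLevel_mono : Monotone (greedyLevel c σ) := by
  intro T S h
  obtain rfl | h := eq_or_ssubset_of_subset h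
  · rfl
  · exact (greedyLevel_le_greedyFloor h).trans greedyLevel_spec.1

theorem exists_subset_greedyFloor_le_lt_greedyLevel (h : v < greedyLevel c σ S) :
    ∃ S' ⊆ S, greedyFloor c σ S' ≤ v ∧ v < greedyLevel c σ S' := by
  induction S using Finset.strongInduction with
  | H S ih =>
    by_cases hS : greedyFloor c σ S ≤ v
    · exact ⟨S, subset_rfl, hS, h⟩
    · obtain ⟨⟨T, hT⟩, -, hvT⟩ := Finset.lt_sup_iff.1 (not_le.1 hS)
      obtain ⟨S', hS', hS'v⟩ := ih T (mem_ssubsets.1 hT) hvT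
      exact ⟨S', hS'.trans (mem_ssubsets.1 hT).subset, hS'v⟩

theorem exists_monotone_blue_of_lt_greedyLevel (h : v < greedyLevel c σ S) :
    ∃ T : ℕ → Finset X, Monotone T ∧ T v ⊆ S ∧ ∀ u ≤ v, c (T u, prefixSet σ u) = true := by
  induction v generalizing S with
  | zero =>
    obtain ⟨S', hS', hfl, hlt⟩ := exists_subset_greedyFloor_le_lt_greedyLevel h
    refine ⟨fun _ ↦ S', monotone_const, hS', fun u hu ↦ ?_⟩
    obtain rfl := Nat.le_zero.1 hu
    exact blue_of_greedyFloor_le_of_lt_greedyLevel hfl hlt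
  | succ v ih =>
    obtain ⟨S', hS', hfl, hlt⟩ := exists_subset_greedyFloor_le_lt_greedyLevel h
    obtain ⟨T, hT, hTS', hblue⟩ := ih (v.lt_succ_self.trans hlt)
    refine ⟨fun u ↦ if u ≤ v then T u else S', ?_, by simpa using hS', fun u hu ↦ ?_⟩
    · intro a b hab
      dsimp only
      split_ifs with ha hb hb
      exacts [hT hab, (hT ha).trans hTS', by omega, subset_rfl]
    · dsimp only
      split_ifs with huv
      · exact hblue u huv
      · obtain rfl : u = v + 1 := by omega
        exact blue_of_greedyFloor_le_of_lt_greedyLevel hfl hlt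

variable (c σ) in
theorem exists_red_cube_or_isBlueChain :
    (∃ f : Finset X ↪o Finset X × Finset (Fin m), ∀ S, c (f S) = false) ∨
      ∃ T, IsBlueChain c σ T := by
  by_cases h : ∀ S, greedyLevel c σ S ≤ m
  · refine .inl ⟨.ofMapLEIff (fun S ↦ (S, prefixSet σ (greedyLevel c σ S))) fun S S' ↦ ?_,
      fun S ↦ greedyLevel_spec.2.resolve_left (h S).not_gt⟩
    exact ⟨fun h ↦ h.1, fun h ↦ ⟨h, prefixSet_mono (greedyLevel_mono h)⟩⟩
  · push Not at h
    obtain ⟨S, hS⟩ := h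
    obtain ⟨T, hT, -, hblue⟩ := exists_monotone_blue_of_lt_greedyLevel hS
    exact .inr ⟨T, hT, hblue⟩

end Greedy

def Diverge (k : ℕ) (σ τ : Equiv.Perm (Fin m)) : Prop :=
  ∃ x y, (σ x : ℕ) + k ≤ σ y ∧ (τ y : ℕ) + k ≤ τ x

section Diverge

variable {k : ℕ} {σ τ : Equiv.Perm (Fin m)}

theorem diverge_comm : Diverge k σ τ ↔ Diverge k τ σ :=
  ⟨fun ⟨x, y, hσ, hτ⟩ ↦ ⟨y, x, hτ, hσ⟩, fun ⟨x, y, hτ, hσ⟩ ↦ ⟨y, x, hσ, hτ⟩⟩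

theorem le_add_of_not_diverge (h : ¬ Diverge k σ τ) (j : Fin m) : (σ j : ℕ) ≤ τ j + 2 * k := by
  by_contra! hj
  have hcard : ¬ prefixSet σ (τ j + k + 1) ⊆ prefixSet τ (τ j + k) := fun hsub ↦ by
    have := card_le_card hsub
    rw [card_prefixSet, card_prefixSet] at this
    omega
  obtain ⟨x, hxσ, hxτ⟩ := not_subset.1 hcard
  rw [mem_prefixSet] at hxσ hxτ
  exact h ⟨x, j, by omega, by omega⟩

end Diverge

theorem card_filter_fin_le_add_le (a w : ℕ) :
    #{p : Fin m | (p : ℕ) ≤ a + w ∧ a ≤ p + w} ≤ 2 * w + 1 :=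
  calc #{p : Fin m | (p : ℕ) ≤ a + w ∧ a ≤ p + w}
      ≤ #(Icc (a - w) (a + w)) :=
        card_le_card_of_injOn Fin.val (fun p hp ↦ by simp at hp ⊢; omega)
          Fin.val_injective.injOn
    _ ≤ 2 * w + 1 := by simp; omega

theorem card_filter_le_add_le (τ : Equiv.Perm (Fin m)) (w : ℕ) :
    #{σ : Equiv.Perm (Fin m) | ∀ j, (σ j : ℕ) ≤ τ j + w ∧ (τ j : ℕ) ≤ σ j + w} ≤
      (2 * w + 1) ^ m :=
  calc _ ≤ #(Fintype.piFinset fun j ↦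
          ({p : Fin m | (p : ℕ) ≤ τ j + w ∧ τ j ≤ p + w} : Finset _)) :=
        card_le_card_of_injOn (⇑) (fun σ hσ ↦ by simpa using hσ) DFunLike.coe_injective.injOn
    _ = ∏ j, #{p : Fin m | (p : ℕ) ≤ τ j + w ∧ τ j ≤ p + w} := Fintype.card_piFinset _
    _ ≤ ∏ _j : Fin m, (2 * w + 1) := prod_le_prod' fun j _ ↦ card_filter_fin_le_add_le _ _
    _ = (2 * w + 1) ^ m := by simp

section SubdividedDiamond

variable {X : Type*} {c : Finset X × Finset (Fin m) → Bool} {σ τ : Equiv.Perm (Fin m)}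
  {T T' : ℕ → Finset X}

theorem strictMonoOn_mk_prefixSet (hT : Monotone T) :
    StrictMonoOn (fun v ↦ (T v, prefixSet σ v)) (Set.Iic m) :=
  fun _ ha _ hb hab ↦ Prod.mk_lt_mk_of_le_of_lt (hT hab.le) (prefixSet_strictMonoOn ha hb hab)

theorem not_mk_prefixSet_le {S S' : Finset X} {a b : ℕ} {z : Fin m} (ha : (σ z : ℕ) < a)
    (hb : b ≤ τ z) : ¬ (S, prefixSet σ a) ≤ (S', prefixSet τ b) :=
  fun h ↦ (mem_prefixSet.1 (h.2 (mem_prefixSet.2 ha))).not_ge hb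

theorem exists_blue_subdividedDiamond_of_diverge {s t : ℕ} (hT : IsBlueChain c σ T)
    (hT' : IsBlueChain c τ T') (h₀ : T 0 = T' 0) (hm : T m = T' m)
    (hd : Diverge (max s t) σ τ) :
    ∃ f : SubdividedDiamond s t ↪o Finset X × Finset (Fin m), ∀ z, c (f z) = true := by
  obtain ⟨x, y, hxy, hyx⟩ := hd
  have hs := le_max_left s t
  have ht := le_max_right s t
  have hσy := (σ y).isLt
  have hτx := (τ x).isLt
  set p : ℕ → Finset X × Finset (Fin m) := fun v ↦ (T v, prefixSet σ v)
  set q : ℕ → Finset X × Finset (Fin m) := fun v ↦ (T' v, prefixSet τ v)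
  have hpq₀ : p 0 = q 0 := by simp [p, q, h₀, prefixSet_zero]
  have hpqm : p m = q m := by simp [p, q, hm, prefixSet_of_le le_rfl]
  have hp := strictMonoOn_mk_prefixSet (σ := σ) hT.1
  have hq := strictMonoOn_mk_prefixSet (σ := τ) hT'.1
  -- The levels `σ x + 1, …, σ x + s` of `p` contain `x` but not `y`, and the levels
  -- `τ y + 1, …, τ y + t` of `q` contain `y` but not `x`.
  let A : Fin s ↪o _ := .ofStrictMono (fun i ↦ p (σ x + 1 + i))
    fun i i' h ↦ hp (by simp; omega) (by simp; omega) (by simpa using h)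
  let B : Fin t ↪o _ := .ofStrictMono (fun j ↦ q (τ y + 1 + j))
    fun j j' h ↦ hq (by simp; omega) (by simp; omega) (by simpa using h)
  refine ⟨SubdividedDiamond.orderEmbedding (p 0) (p m) A B (hp (by simp) (by simp) (by omega))
    (fun i ↦ ⟨hp (by simp) (by simp; omega) (by omega), hp (by simp; omega) (by simp) (by omega)⟩)
    (fun j ↦ by
      rw [hpq₀, hpqm]
      exact ⟨hq (by simp) (by simp; omega) (by omega), hq (by simp; omega) (by simp) (by omega)⟩)
    (fun i j ↦ not_mk_prefixSet_le (z := x) (by omega) (by omega))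
    (fun i j ↦ not_mk_prefixSet_le (z := y) (by omega) (by omega)), ?_⟩
  exact SubdividedDiamond.forall_orderEmbedding_apply (c · = true) (hT.2 0 (by omega))
    (hT.2 m le_rfl) (fun i ↦ hT.2 _ (by omega)) (fun j ↦ hT'.2 _ (by omega))

end SubdividedDiamond

theorem exists_blue_subdividedDiamond_or_red_cube {X : Type*} [Fintype X] [DecidableEq X]
    {s t : ℕ} (hcount : 4 ^ Fintype.card X * (4 * max s t + 1) ^ m < m !)
    (c : Finset X × Finset (Fin m) → Bool) :
    (∃ f : SubdividedDiamond s t ↪o Finset X × Finset (Fin m), ∀ z, c (f z) = true) ∨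
      ∃ f : Finset X ↪o Finset X × Finset (Fin m), ∀ S, c (f S) = false := by
  refine or_iff_not_imp_right.2 fun hred ↦ ?_
  choose T hT using fun σ ↦ (exists_red_cube_or_isBlueChain c σ).resolve_left hred
  obtain ⟨ends, hends⟩ := Fintype.exists_lt_card_fiber_of_mul_lt_card
    (fun σ ↦ (T σ 0, T σ m)) (n := (4 * max s t + 1) ^ m) (by
      simpa [Fintype.card_perm, ← mul_pow, show (2 * 2 : ℕ) = 4 from rfl] using hcount)
  set F : Finset (Equiv.Perm (Fin m)) := {σ | (T σ 0, T σ m) = ends}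
  obtain ⟨τ, hτ⟩ : F.Nonempty := card_pos.1 (by omega)
  obtain ⟨σ, hσ, hd⟩ : ∃ σ ∈ F, Diverge (max s t) σ τ := by
    by_contra! hF
    have hclose : F ⊆ ({σ : Equiv.Perm (Fin m) |
        ∀ j, (σ j : ℕ) ≤ τ j + 2 * max s t ∧ (τ j : ℕ) ≤ σ j + 2 * max s t} : Finset _) :=
      fun σ hσ ↦ by
        have hd := hF σ hσ
        simpa using fun j ↦
          ⟨le_add_of_not_diverge hd j, le_add_of_not_diverge (mt diverge_comm.1 hd) j⟩
    have := (card_le_card hclose).trans (card_filter_le_add_le τ (2 * max s t))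
    rw [← mul_assoc] at this
    exact hends.not_ge this
  obtain ⟨h₀, hm⟩ := Prod.ext_iff.1 ((mem_filter.1 hσ).2.trans (mem_filter.1 hτ).2.symm)
  exact exists_blue_subdividedDiamond_of_diverge (hT σ) (hT τ) h₀ hm hd

end PosetRamsey

theorem posetRamsey_subdividedDiamond_le {s t n m : ℕ}
    (h : 4 ^ n * (4 * max s t + 1) ^ m < m !) :
    posetRamsey (SubdividedDiamond s t) (Finset (Fin n)) ≤ n + m :=
  posetRamsey_le_of_orderEmbedding
    (Finset.sumEquiv.symm.toOrderEmbedding.trans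
      (Finset.mapEmbedding finSumFinEquiv.toEmbedding))
    (PosetRamsey.exists_blue_subdividedDiamond_or_red_cube (by simpa using h))

section Asymptotics

open Real Filter

theorem four_pow_mul_pow_lt_factorial {n M C : ℕ} (hM : 0 < M)
    (h : (4 : ℝ) ^ ((n : ℝ) / M) * C * exp 1 < M) : 4 ^ n * C ^ M < M ! := by
  have hpow : ((4 : ℝ) ^ ((n : ℝ) / M) * C * exp 1) ^ M = 4 ^ n * C ^ M * exp M := by
    rw [mul_pow, mul_pow, ← rpow_mul_natCast, div_mul_cancel₀ _ (by positivity), rpow_natCast,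
      exp_one_pow]
    norm_num
  have hfac : (M : ℝ) ^ M / exp M ≤ M ! := by
    have := pow_div_factorial_le_exp (M : ℝ) (Nat.cast_nonneg M) M
    rw [div_le_iff₀ (exp_pos _)]
    rw [div_le_iff₀ (by positivity)] at this
    linarith
  have key : (4 ^ n * C ^ M : ℝ) < M ! :=
    calc (4 ^ n * C ^ M : ℝ) = ((4 : ℝ) ^ ((n : ℝ) / M) * C * exp 1) ^ M / exp M := by
          rw [hpow, mul_div_cancel_right₀ _ (exp_pos _).ne']
      _ < M ^ M / exp M := by gcongr
      _ ≤ M ! := hfac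
  exact_mod_cast key

theorem eventually_mul_logb_lt_rpow (K : ℝ) {δ : ℝ} (hδ : 0 < δ) :
    ∀ᶠ x : ℝ in atTop, K * logb 2 x < x ^ δ := by
  have hlogb : logb 2 =o[atTop] fun x : ℝ ↦ x ^ δ :=
    (isLittleO_log_rpow_atTop hδ).const_mul_left (log 2)⁻¹ |>.congr_left fun x ↦ by
      rw [logb, div_eq_inv_mul]
  filter_upwards [hlogb.def (c := (|K| + 1)⁻¹) (by positivity), eventually_gt_atTop 0]
    with x hx hx0
  have hxδ : 0 < x ^ δ := rpow_pos_of_pos hx0 δ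
  rw [norm_eq_abs, norm_of_nonneg hxδ.le] at hx
  calc K * logb 2 x ≤ |K| * |logb 2 x| := (le_abs_self _).trans (abs_mul _ _).le
    _ ≤ |K| * ((|K| + 1)⁻¹ * x ^ δ) := by gcongr
    _ < x ^ δ := by
      rw [← mul_assoc, ← div_eq_mul_inv]
      exact mul_lt_of_lt_one_left hxδ ((div_lt_one (by positivity)).2 (lt_add_one _))

theorem eventually_exists_le_and_four_pow_mul_pow_lt_factorial (C : ℕ) {ε : ℝ} (hε : 0 < ε) :
    ∀ᶠ n : ℕ in atTop, ∃ M : ℕ, (M : ℝ) ≤ (2 + ε) * n / logb 2 n ∧ 4 ^ n * C ^ M < M ! := by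
  -- `2 / (2 + ε / 2) = 1 - δ`, so `M ≥ (2 + ε / 2) n / log₂ n` gives `4 ^ (n / M) ≤ n ^ (1 - δ)`.
  set δ := ε / (4 + ε) with hδ
  have hδ0 : 0 < δ := by positivity
  filter_upwards [tendsto_natCast_atTop_atTop.eventually (eventually_ge_atTop (2 : ℝ)),
    tendsto_natCast_atTop_atTop.eventually (eventually_mul_logb_lt_rpow (2 / ε) hδ0),
    tendsto_natCast_atTop_atTop.eventually (eventually_mul_logb_lt_rpow (C * exp 1) hδ0)]
    with n (hn : (2 : ℝ) ≤ n) (h₁ : 2 / ε * logb 2 n < n ^ δ)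
      (h₂ : C * exp 1 * logb 2 n < n ^ δ)
  set x : ℝ := (n : ℝ)
  set L := logb 2 x
  have hL : 1 ≤ L := by simpa using logb_le_logb_of_le one_lt_two two_pos hn
  have hxδ : x ^ δ ≤ x := by
    simpa using rpow_le_rpow_of_exponent_le (by linarith) (show δ ≤ 1 by
      rw [hδ, div_le_one (by positivity)]; linarith)
  set M := ⌊(2 + ε) * x / L⌋₊
  refine ⟨M, Nat.floor_le (by positivity), ?_⟩
  have hM : (2 + ε / 2) * x / L ≤ M := by
    have hfl := Nat.lt_floor_add_one ((2 + ε) * x / L)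
    have : 1 ≤ ε / 2 * x / L := by
      rw [le_div_iff₀ (by linarith), one_mul]
      calc L = ε / 2 * (2 / ε * L) := by field_simp
        _ ≤ ε / 2 * x := by gcongr; exact (h₁.trans_le hxδ).le
    have : (2 + ε / 2) * x / L = (2 + ε) * x / L - ε / 2 * x / L := by ring
    linarith
  have hML : (2 + ε / 2) * x ≤ M * L := (div_le_iff₀ (by linarith)).1 hM
  have hM0 : (0 : ℝ) < M := hM.trans_lt' (div_pos (by positivity) (by linarith))
  refine four_pow_mul_pow_lt_factorial (by exact_mod_cast hM0) ?_
  have hexp : 2 * (x / M) ≤ L * (1 - δ) := by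
    have : L * (1 - δ) * M = 4 * (M * L) / (4 + ε) := by
      rw [hδ]; field_simp; ring
    rw [mul_div_assoc', div_le_iff₀ hM0, this, le_div_iff₀ (by positivity)]
    linarith
  have h4 : (4 : ℝ) ^ (x / M) ≤ x ^ (1 - δ) :=
    calc (4 : ℝ) ^ (x / M) = 2 ^ (2 * (x / M)) := by
          rw [rpow_mul two_pos.le]; norm_num
      _ ≤ 2 ^ (L * (1 - δ)) := rpow_le_rpow_of_exponent_le one_le_two hexp
      _ = x ^ (1 - δ) := by
          rw [rpow_mul two_pos.le, rpow_logb two_pos (by norm_num) (by linarith)]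
  calc (4 : ℝ) ^ (x / M) * C * exp 1 ≤ x ^ (1 - δ) * (C * exp 1) := by
        rw [mul_assoc]; gcongr
    _ < x ^ (1 - δ) * (x ^ δ / L) := by
        gcongr
        rw [lt_div_iff₀ (by linarith)]; exact h₂
    _ = x / L := by
        rw [mul_div_assoc', ← rpow_add (by linarith), sub_add_cancel, rpow_one]
    _ ≤ M := le_trans (by gcongr; nlinarith) hM

end Asymptotics

theorem subdivided_diamond_vs_cube_ramsey_upper_general (s t : ℕ)
    (ε : ℝ) (hε : 0 < ε) :
    ∃ n₀ : ℕ, ∀ n : ℕ, n₀ ≤ n →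
      (posetRamsey (SubdividedDiamond s t) (Finset (Fin n)) : ℝ) ≤
        n + (2 + ε) * n / Real.logb 2 n := by
  obtain ⟨n₀, hn₀⟩ := Filter.eventually_atTop.1
    (eventually_exists_le_and_four_pow_mul_pow_lt_factorial (4 * max s t + 1) hε)
  refine ⟨n₀, fun n hn ↦ ?_⟩
  obtain ⟨M, hM, hcount⟩ := hn₀ n hn
  have hR : posetRamsey (SubdividedDiamond s t) (Finset (Fin n)) ≤ n + M :=
    posetRamsey_subdividedDiamond_le hcount
  calc (posetRamsey (SubdividedDiamond s t) (Finset (Fin n)) : ℝ) ≤ n + M := by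
        exact_mod_cast hR
    _ ≤ n + (2 + ε) * n / Real.logb 2 n := by gcongr

/-- For fixed `s, t ≥ 1` and every `ε > 0`, for all sufficiently large `n`,
`R(SD_{s,t}, Q_n) ≤ n + (2 + ε) n / log₂ n`. -/
theorem subdivided_diamond_vs_cube_ramsey_upper (s t : ℕ) (hs : 1 ≤ s) (ht : 1 ≤ t)
    (ε : ℝ) (hε : 0 < ε) :
    ∃ n₀ : ℕ, ∀ n : ℕ, n₀ ≤ n →
      (posetRamsey (SubdividedDiamond s t) (Finset (Fin n)) : ℝ) ≤
        n + (2 + ε) * n / Real.logb 2 n :=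
  subdivided_diamond_vs_cube_ramsey_upper_general s t ε hε
end

section
/- (Chain Lemma) Let X and Y be disjoint finite sets with |X| = n and |Y| = k, let the Boolean lattice Q(X ∪ Y) of all subsets of X ∪ Y be blue/red colored, and fix a linear ordering τ = (y₁,…,y_k) of Y. Then Q(X ∪ Y) contains either a red copy of Q_n, or a blue Y-chain corresponding to τ, i.e. sets X₀ ⊆ X₁ ⊆ … ⊆ X_k ⊆ X such that each of the k+1 sets X_i ∪ {y₁,…,y_i} (for i = 0,…,k, where the empty union is taken for i = 0) is colored blue. -/
/-!
For `A ⊆ X` let `d A ≤ k` be the length of the longest blue partial chain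
`Z₀ ⊆ … ⊆ Z_{d-1} ⊆ A` with `Z_j ∪ {y₀, …, y_{j-1}}` blue. If no subset of `X` carries a blue
chain of full length `k + 1`, the set `A ∪ {y₀, …, y_{d A - 1}}` must be red, since otherwise
`A` itself would extend the chain. As `d` is monotone and `X` is disjoint from `Y`, the map
`A ↦ A ∪ {y₀, …, y_{d A - 1}}` on `Q(X)` is an order embedding, i.e. a red copy of `Q_n`.
-/

open Finset

def OrderEmbedding.supOfDisjoint {P β : Type*} [PartialOrder P] [DistribLattice β] [OrderBot β]
    (f : P ↪o β) (h : P → β) (hh : Monotone h) (hdisj : ∀ a b, Disjoint (f a) (h b)) :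
    P ↪o β :=
  OrderEmbedding.ofMapLEIff (fun a => f a ⊔ h a) fun a b =>
    ⟨fun hab => f.le_iff_le.1 <|
      Disjoint.left_le_of_le_sup_right (le_sup_left.trans hab) (hdisj a b),
      fun hab => sup_le_sup (f.monotone hab) (hh hab)⟩

@[simp]
theorem OrderEmbedding.supOfDisjoint_apply {P β : Type*} [PartialOrder P] [DistribLattice β]
    [OrderBot β] (f : P ↪o β) (h : P → β) (hh : Monotone h)
    (hdisj : ∀ a b, Disjoint (f a) (h b)) (a : P) : f.supOfDisjoint h hh hdisj a = f a ⊔ h a :=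
  rfl

theorem Finset.exists_orderEmbedding_subset_of_card_eq {α : Type*} {n : ℕ} (X : Finset α)
    (hX : X.card = n) : ∃ g : Finset (Fin n) ↪o Finset α, ∀ S, g S ⊆ X := by
  let e : Fin n ↪ α :=
    (X.equivFinOfCardEq hX).symm.toEmbedding.trans (Function.Embedding.subtype _)
  refine ⟨Finset.mapEmbedding e, fun S x hx => ?_⟩
  obtain ⟨i, -, rfl⟩ := Finset.mem_map.1 hx
  exact ((X.equivFinOfCardEq hX).symm i).2

section BlueChain

variable {α : Type*} [DecidableEq α] {k : ℕ}

def initialImage (y : Fin k → α) (m : ℕ) : Finset α :=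
  (univ.filter fun ℓ : Fin k => (ℓ : ℕ) < m).image y

theorem initialImage_mono (y : Fin k → α) : Monotone (initialImage y) := fun _ _ hab =>
  image_subset_image fun ℓ hℓ => by
    simp only [mem_filter] at hℓ ⊢
    exact ⟨hℓ.1, hℓ.2.trans_le hab⟩

theorem initialImage_subset {y : Fin k → α} {Y : Finset α} (hyY : ∀ i, y i ∈ Y) (m : ℕ) :
    initialImage y m ⊆ Y := by
  intro x hx
  obtain ⟨ℓ, -, rfl⟩ := mem_image.1 hx
  exact hyY ℓ

variable (c : Finset α → Bool) (y : Fin k → α)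

def HasBlueChain (A : Finset α) (m : ℕ) : Prop :=
  ∃ Z : ℕ → Finset α, Monotone Z ∧ (∀ j, Z j ⊆ A) ∧ ∀ j < m, c (Z j ∪ initialImage y j) = true

variable {c y}

theorem hasBlueChain_zero (A : Finset α) : HasBlueChain c y A 0 :=
  ⟨fun _ => ∅, monotone_const, fun _ => empty_subset A, fun _ h => absurd h (Nat.not_lt_zero _)⟩

theorem HasBlueChain.mono {A B : Finset α} {m : ℕ} (hAB : A ⊆ B) (h : HasBlueChain c y A m) :
    HasBlueChain c y B m :=
  let ⟨Z, hZ, hZA, hblue⟩ := h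
  ⟨Z, hZ, fun j => (hZA j).trans hAB, hblue⟩

/-- A blue `A ∪ {y 0, …, y (m-1)}` extends a chain below `A` by `A` itself. -/
theorem HasBlueChain.succ {A : Finset α} {m : ℕ} (h : HasBlueChain c y A m)
    (hA : c (A ∪ initialImage y m) = true) : HasBlueChain c y A (m + 1) := by
  obtain ⟨Z, hZ, hZA, hblue⟩ := h
  refine ⟨fun j => if j < m then Z j else A, fun a b hab => ?_, fun j => ?_, fun j hj => ?_⟩
  · by_cases ha : a < m <;> by_cases hb : b < m <;> simp only [ha, hb, if_true, if_false]
    exacts [hZ hab, hZA a, absurd (hb.trans_le' hab) ha, subset_rfl]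
  · by_cases hj : j < m <;> simp only [hj, if_true, if_false]
    exacts [hZA j, subset_rfl]
  · by_cases hjm : j < m
    · simpa [hjm] using hblue j hjm
    · obtain rfl : j = m := by omega
      simpa [hjm] using hA

variable (c y)

open Classical in
/-- Capped at `k`: chains of the full length `k + 1` are dealt with separately. -/
noncomputable def chainDepth (A : Finset α) : ℕ :=
  Nat.findGreatest (HasBlueChain c y A) k

theorem chainDepth_mono : Monotone (chainDepth c y) := fun _ _ hAB => by
  classical
  exact Nat.findGreatest_mono_left (fun _ => HasBlueChain.mono hAB) k

variable {c y}

theorem color_chainDepth_eq_false {A : Finset α} (hA : ¬HasBlueChain c y A (k + 1)) :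
    c (A ∪ initialImage y (chainDepth c y A)) = false := by
  classical
  by_contra hblue
  have hext : HasBlueChain c y A (chainDepth c y A + 1) :=
    (Nat.findGreatest_spec (Nat.zero_le k) (hasBlueChain_zero A)).succ
      (Bool.not_eq_false _ ▸ hblue)
  rcases Nat.lt_or_ge (chainDepth c y A) k with hlt | hge
  · exact Nat.findGreatest_is_greatest (Nat.lt_succ_self _) hlt hext
  · rw [show chainDepth c y A = k from le_antisymm (Nat.findGreatest_le k) hge] at hext
    exact hA hext

end BlueChain

theorem chain_lemma_general {α : Type*} [DecidableEq α] (n k : ℕ) (X Y : Finset α)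
    (hdisj : Disjoint X Y) (hX : X.card = n)
    (c : Finset α → Bool)
    (y : Fin k → α) (hyY : ∀ i, y i ∈ Y) :
    (∃ f : Finset (Fin n) ↪o Finset α,
        (∀ S, f S ⊆ X ∪ Y) ∧ (∀ S, c (f S) = false)) ∨
    (∃ Z : Fin (k + 1) → Finset α,
        (∀ i j, i ≤ j → Z i ⊆ Z j) ∧ (∀ i, Z i ⊆ X) ∧
        (∀ i : Fin (k + 1),
          c (Z i ∪ (Finset.univ.filter fun ℓ : Fin k => (ℓ : ℕ) < (i : ℕ)).image y)
            = true)) := by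
  by_cases hX_chain : HasBlueChain c y X (k + 1)
  · obtain ⟨Z, hZ, hZX, hblue⟩ := hX_chain
    exact Or.inr ⟨fun i => Z i, fun i j hij => hZ hij, fun i => hZX i, fun i => hblue i i.isLt⟩
  obtain ⟨g, hgX⟩ := X.exists_orderEmbedding_subset_of_card_eq hX
  have hYX : ∀ S T, Disjoint (g S) (initialImage y (chainDepth c y (g T))) := fun S T =>
    (hdisj.mono_left (hgX S)).mono_right (initialImage_subset hyY _)
  refine Or.inl ⟨g.supOfDisjoint _
    ((initialImage_mono y).comp ((chainDepth_mono c y).comp g.monotone)) hYX,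
    fun S => ?_, fun S => ?_⟩
  · exact union_subset_union (hgX S) (initialImage_subset hyY _)
  · exact color_chainDepth_eq_false fun h => hX_chain (h.mono (hgX S))

/-- **Chain Lemma.** Let `X` and `Y` be disjoint finite sets with `|X| = n`, `|Y| = k`,
let the Boolean lattice of subsets of `X ∪ Y` be blue/red colored (`true` = blue,
`false` = red), and fix a linear ordering `y 0, …, y (k-1)` of `Y`. Then there is either
a red induced copy of `Q_n` inside `Q(X ∪ Y)`, or a blue `Y`-chain corresponding to the
ordering: sets `Z 0 ⊆ Z 1 ⊆ … ⊆ Z k ⊆ X` such that each `Z i ∪ {y 0, …, y (i-1)}`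
is colored blue. -/
theorem chain_lemma {α : Type*} [DecidableEq α] (n k : ℕ) (X Y : Finset α)
    (hdisj : Disjoint X Y) (hX : X.card = n) (hY : Y.card = k)
    (c : Finset α → Bool)
    (y : Fin k → α) (hyInj : Function.Injective y) (hyY : ∀ i, y i ∈ Y) :
    (∃ f : Finset (Fin n) ↪o Finset α,
        (∀ S, f S ⊆ X ∪ Y) ∧ (∀ S, c (f S) = false)) ∨
    (∃ Z : Fin (k + 1) → Finset α,
        (∀ i j, i ≤ j → Z i ⊆ Z j) ∧ (∀ i, Z i ⊆ X) ∧
        (∀ i : Fin (k + 1),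
          c (Z i ∪ (Finset.univ.filter fun ℓ : Fin k => (ℓ : ℕ) < (i : ℕ)).image y)
            = true)) :=
  chain_lemma_general n k X Y hdisj hX c y hyY
end

section
/- Let n and k be positive integers and let Q be a blue/red colored Boolean lattice of dimension n + k. Then Q contains a red copy of Q_n or a blue chain of k+1 elements, i.e. k+1 blue sets Z₀ ⊂ Z₁ ⊂ … ⊂ Z_k. -/
/-!
Split the ground set `Fin (n + k)` as `Fin n ⊕ Fin k` and use the chain of initial segments
`∅ ⊂ {0} ⊂ … ⊂ Fin k` of the second part: this embeds the poset `Q_n × {0 < 1 < … < k}` into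
`Q_{n+k}`. Call a monotone sequence `S₀ ≤ S₁ ≤ … ≤ S_{m-1} ≤ S` with every `(Sₜ, t)` blue a
staircase of length `m` below `S`. If some staircase has length `k + 1` it is a blue chain.
Otherwise the length `h S` of the longest staircase below `S` is at most `k` and monotone in `S`,
so `S ↦ (S, h S)` is a copy of `Q_n`, and it is red: a blue `(S, h S)` would extend the longest
staircase below `S`.
-/

open Finset

section Staircase

variable {α : Type*} [Preorder α] {k : ℕ} (p : α → Fin (k + 1) → Prop)

def HasStaircase (m : ℕ) (a : α) : Prop :=
  ∃ s : Fin (k + 1) → α, Monotone s ∧ ∀ t : Fin (k + 1), (t : ℕ) < m → s t ≤ a ∧ p (s t) t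

variable {p}

lemma hasStaircase_zero (a : α) : HasStaircase p 0 a :=
  ⟨fun _ => a, monotone_const, by simp⟩

lemma HasStaircase.mono {m : ℕ} {a b : α} (hab : a ≤ b) (h : HasStaircase p m a) :
    HasStaircase p m b := by
  obtain ⟨s, hs, hsa⟩ := h
  exact ⟨s, hs, fun t ht => ⟨(hsa t ht).1.trans hab, (hsa t ht).2⟩⟩

lemma HasStaircase.succ {m : ℕ} {a : α} (h : HasStaircase p m a) (hm : m < k + 1)
    (ha : p a ⟨m, hm⟩) : HasStaircase p (m + 1) a := by
  obtain ⟨s, hs, hsa⟩ := h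
  refine ⟨fun t => if (t : ℕ) < m then s t else a, ?_, fun t ht => ?_⟩
  · intro i j hij
    have hij' : (i : ℕ) ≤ j := hij
    dsimp only
    split_ifs with hi hj hj
    exacts [hs hij, (hsa i hi).1, absurd (hij'.trans_lt hj) hi, le_rfl]
  · by_cases htm : (t : ℕ) < m
    · simpa [htm] using hsa t htm
    · obtain rfl : t = ⟨m, hm⟩ := Fin.ext (show (t : ℕ) = m by omega)
      simpa using ha

variable (p) in
theorem exists_monotone_forall_or_exists_monotone_forall_not :
    (∃ s : Fin (k + 1) → α, Monotone s ∧ ∀ t, p (s t) t) ∨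
      ∃ h : α → Fin (k + 1), Monotone h ∧ ∀ a, ¬ p a (h a) := by
  classical
  by_cases hfull : ∃ a, HasStaircase p (k + 1) a
  · obtain ⟨a, s, hs, hsa⟩ := hfull
    exact Or.inl ⟨s, hs, fun t => (hsa t t.isLt).2⟩
  simp only [not_exists] at hfull
  let height (a : α) : ℕ := Nat.findGreatest (fun m => HasStaircase p m a) k
  have height_le (a : α) : height a ≤ k := Nat.findGreatest_le k
  have hasStaircase_height (a : α) : HasStaircase p (height a) a :=
    Nat.findGreatest_spec (P := (HasStaircase p · a)) (Nat.zero_le k) (hasStaircase_zero a)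
  refine Or.inr ⟨fun a => ⟨height a, Nat.lt_succ_of_le (height_le a)⟩, fun a b hab => ?_,
    fun a ha => ?_⟩
  · exact Fin.mk_le_mk.2 (Nat.le_findGreatest (height_le a) ((hasStaircase_height a).mono hab))
  · have hlonger := (hasStaircase_height a).succ _ ha
    rcases (height_le a).lt_or_eq with hlt | heq
    · exact (height a).lt_irrefl (Nat.le_findGreatest hlt hlonger)
    · rw [heq] at hlonger
      exact hfull a hlonger

end Staircase

def OrderEmbedding.prodMap {α β γ δ : Type*} [PartialOrder α] [Preorder β] [PartialOrder γ]
    [Preorder δ] (f : α ↪o β) (g : γ ↪o δ) : α × γ ↪o β × δ :=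
  OrderEmbedding.ofMapLEIff (Prod.map f g) fun _ _ => by simp [Prod.le_def]

def Monotone.graphOrderEmbedding {α β : Type*} [PartialOrder α] [Preorder β] {h : α → β}
    (hh : Monotone h) : α ↪o α × β :=
  OrderEmbedding.ofMapLEIff (fun a => (a, h a)) fun _ _ =>
    Prod.mk_le_mk.trans (and_iff_left_of_imp fun hab => hh hab)

lemma strictMono_prodMk_id {α β : Type*} [Preorder α] [Preorder β] {s : β → α}
    (hs : Monotone s) : StrictMono fun i => (s i, i) :=
  fun _ _ hij => Prod.lt_iff.2 (Or.inr ⟨hs hij.le, hij⟩)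

def Fin.initialSegments (k : ℕ) : Fin (k + 1) ↪o Finset (Fin k) :=
  OrderEmbedding.ofStrictMono (fun i => univ.filter fun j : Fin k => j.castSucc < i) <| by
    intro i j hij
    have hi : (i : ℕ) < k := by omega
    refine (ssubset_iff_of_subset fun x hx => ?_).2 ⟨⟨i, hi⟩, ?_, ?_⟩
    · simp only [mem_filter, mem_univ, true_and] at hx ⊢
      exact hx.trans hij
    · simp only [mem_filter, mem_univ, true_and]
      exact hij
    · simp only [mem_filter, mem_univ, true_and]
      exact lt_irrefl (i : ℕ)

def cubeTimesChainEmbedding (n k : ℕ) : Finset (Fin n) × Fin (k + 1) ↪o Finset (Fin (n + k)) :=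
  ((OrderIso.refl _).toOrderEmbedding.prodMap (Fin.initialSegments k)).trans <|
    Finset.sumEquiv.symm.toOrderEmbedding.trans (mapEmbedding finSumFinEquiv.toEmbedding)

theorem red_cube_or_blue_chain_general (n k : ℕ)
    (c : Finset (Fin (n + k)) → Bool) :
    (∃ f : Finset (Fin n) ↪o Finset (Fin (n + k)), ∀ S, c (f S) = false) ∨
    (∃ Z : Fin (k + 1) → Finset (Fin (n + k)), StrictMono Z ∧ ∀ i, c (Z i) = true) := by
  let E := cubeTimesChainEmbedding n k
  rcases exists_monotone_forall_or_exists_monotone_forall_not (fun S i => c (E (S, i)) = true)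
    with ⟨s, hs, hblue⟩ | ⟨h, hh, hred⟩
  · exact Or.inr ⟨fun i => E (s i, i), E.strictMono.comp (strictMono_prodMk_id hs), hblue⟩
  · exact Or.inl ⟨hh.graphOrderEmbedding.trans E, fun S => Bool.not_eq_true _ ▸ hred S⟩

/-- Every blue/red coloring (`true` = blue, `false` = red) of a Boolean lattice of
dimension `n + k` (with `n, k ≥ 1`) contains a red induced copy of `Q_n`
or a blue chain of `k + 1` sets `Z 0 ⊂ Z 1 ⊂ … ⊂ Z k`. -/
theorem red_cube_or_blue_chain (n k : ℕ) (hn : 1 ≤ n) (hk : 1 ≤ k)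
    (c : Finset (Fin (n + k)) → Bool) :
    (∃ f : Finset (Fin n) ↪o Finset (Fin (n + k)), ∀ S, c (f S) = false) ∨
    (∃ Z : Fin (k + 1) → Finset (Fin (n + k)), StrictMono Z ∧ ∀ i, c (Z i) = true) :=
  red_cube_or_blue_chain_general n k c
end

section
/- Let r, k ≥ 1 be natural numbers. The number of r-proper permutations π : [k] → [k] is at most 2^{(r + log₂ r)·k}. -/
/-!
Two ranks per index determine a permutation `π`, and both are bounded by the size of the active
set `{ℓ ≤ j | j ≤ π ℓ + 1}`, which is at most `r` when `π` is `r`-proper. At a position `ℓ` with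
`π ℓ + 1 < ℓ`, the value is recorded by its rank among the values `< ℓ - 1` not used before `ℓ`;
counting positions `< ℓ` against values `< ℓ - 1` shows that there are fewer of these than
elements of the active set at `ℓ`. Every other value `j - 1` sits at a position of the active set
at `j` and is recorded by the rank of that position. Reading the ranks back fills in `π` row by
row and column by column, so there are at most `(r (r + 1)) ^ k ≤ (2 ^ r r) ^ k` proper
permutations.
-/

/-- A permutation `π` of `[k] = {1, …, k}` (modelled as `Fin k`, with
`i : Fin k` representing the element `i + 1` of `[k]`) is `r`-proper if for every
`j ∈ [k]`, the number of indices `ℓ ≤ j` with `π(ℓ) ≥ j - 1` is at most `r`.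
In the 0-based model, `ℓ ≤ j` stays `ℓ ≤ j` and `π(ℓ) ≥ j - 1` (1-based) becomes
`(π ℓ : ℕ) + 1 ≥ (j : ℕ)`. -/
def IsProperPerm (r k : ℕ) (π : Equiv.Perm (Fin k)) : Prop :=
  ∀ j : Fin k,
    (Finset.univ.filter fun ℓ : Fin k => ℓ ≤ j ∧ (j : ℕ) ≤ (π ℓ : ℕ) + 1).card ≤ r

open Finset

namespace Finset

variable {α : Type*}

theorem card_filter_lt_lt_card_filter_lt [LinearOrder α] {S : Finset α} {x y : α} (hx : x ∈ S)
    (hxy : x < y) : #{v ∈ S | v < x} < #{v ∈ S | v < y} :=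
  card_lt_card <| (ssubset_iff_of_subset (monotone_filter_right S fun _ _ hv => hv.trans hxy)).2
    ⟨x, by simp [hx, hxy], by simp⟩

theorem eq_of_card_filter_lt_eq [LinearOrder α] {S : Finset α} {x y : α} (hx : x ∈ S)
    (hy : y < x → y ∈ S) (h : #{v ∈ S | v < x} = #{v ∈ S | v < y}) : x = y := by
  rcases lt_trichotomy x y with hxy | rfl | hyx
  · exact absurd h (card_filter_lt_lt_card_filter_lt hx hxy).ne
  · rfl
  · exact absurd h (card_filter_lt_lt_card_filter_lt (hy hyx) hyx).ne'

end Finset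

theorem Equiv.card_add_card_filter_symm_notMem {α β : Type*} [DecidableEq α] [DecidableEq β]
    (e : α ≃ β) (s : Finset α) (t : Finset β) :
    #s + #{y ∈ t | e.symm y ∉ s} = #t + #{x ∈ s | e x ∉ t} := by
  have hmatched : #{x ∈ s | e x ∈ t} = #{y ∈ t | e.symm y ∈ s} :=
    card_nbij' e e.symm (fun x hx => by simp_all) (fun y hy => by simp_all)
      (fun x _ => by simp) (fun y _ => by simp)
  have hs := card_filter_add_card_filter_not (s := s) (fun x => e x ∈ t)
  have ht := card_filter_add_card_filter_not (s := t) (fun y => e.symm y ∈ s)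
  omega

namespace ProperPerm

variable {k : ℕ}

def activeSet (π : Equiv.Perm (Fin k)) (j : Fin k) : Finset (Fin k) :=
  {ℓ | ℓ ≤ j ∧ (j : ℕ) ≤ (π ℓ : ℕ) + 1}

def freeSmallValues (π : Equiv.Perm (Fin k)) (ℓ : Fin k) : Finset (Fin k) :=
  {v | (v : ℕ) + 1 < ℓ ∧ ℓ ≤ π.symm v}

theorem card_freeSmallValues_lt_card_activeSet (π : Equiv.Perm (Fin k)) (ℓ : Fin k) :
    #(freeSmallValues π ℓ) < #(activeSet π ℓ) := by
  rcases Nat.eq_zero_or_pos ℓ with hℓ | hℓ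
  · have hfree : freeSmallValues π ℓ = ∅ := by ext; simp [freeSmallValues, hℓ]
    rw [hfree, card_empty, card_pos]
    exact ⟨ℓ, by simp [activeSet, hℓ]⟩
  · let s : Finset (Fin k) := {m | (m : ℕ) < ℓ}
    let t : Finset (Fin k) := {v | (v : ℕ) < ℓ - 1}
    have hfree : {v ∈ t | π.symm v ∉ s} = freeSmallValues π ℓ := by
      ext v; simp only [s, t, freeSmallValues, mem_filter, mem_univ, true_and, Fin.le_def]; omega
    have hactive : {m ∈ s | π m ∉ t} ⊆ activeSet π ℓ := by
      intro m; simp only [s, t, activeSet, mem_filter, mem_univ, true_and, Fin.le_def]; omega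
    have key := π.card_add_card_filter_symm_notMem s t
    rw [hfree, Fin.card_filter_val_lt, Fin.card_filter_val_lt] at key
    have := card_le_card hactive
    omega

/-- The rank of `π ℓ` among the free small values if `π ℓ + 1 < ℓ`, and their number otherwise. -/
def valueRank (π : Equiv.Perm (Fin k)) (ℓ : Fin k) : ℕ :=
  #{v ∈ freeSmallValues π ℓ | v < π ℓ}

/-- The rank in `activeSet π j` of the position carrying the value `j - 1`, or the size of
`activeSet π j` if that position lies beyond `j` (or `j = 0`). -/
def positionRank (π : Equiv.Perm (Fin k)) (j : Fin k) : ℕ :=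
  #{m ∈ activeSet π j | ∀ p, (π p : ℕ) + 1 = j → m < p}

variable {r : ℕ} {π π' : Equiv.Perm (Fin k)}

theorem valueRank_lt (hπ : IsProperPerm r k π) (ℓ : Fin k) : valueRank π ℓ < r :=
  (card_filter_le _ _).trans_lt ((card_freeSmallValues_lt_card_activeSet π ℓ).trans_le (hπ ℓ))

theorem positionRank_le (hπ : IsProperPerm r k π) (j : Fin k) : positionRank π j ≤ r :=
  (card_filter_le _ _).trans (hπ j)

def AgreeOn (π π' : Equiv.Perm (Fin k)) (a b : ℕ) : Prop :=
  ∀ ℓ v : Fin k, (ℓ : ℕ) < a → (v : ℕ) < b → (π ℓ = v ↔ π' ℓ = v)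

variable {a b n : ℕ}

theorem AgreeOn.symm (h : AgreeOn π π' a b) : AgreeOn π' π a b :=
  fun ℓ v hℓ hv => (h ℓ v hℓ hv).symm

theorem AgreeOn.apply_eq (h : AgreeOn π π' a b) {ℓ : Fin k} (hℓ : (ℓ : ℕ) < a)
    (hv : (π ℓ : ℕ) < b) : π' ℓ = π ℓ :=
  (h ℓ (π ℓ) hℓ hv).1 rfl

theorem AgreeOn.symm_apply_eq (h : AgreeOn π π' a b) {v : Fin k} (hℓ : (π.symm v : ℕ) < a)
    (hv : (v : ℕ) < b) : π'.symm v = π.symm v :=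
  π'.symm_apply_eq.2 (by simpa using (h.apply_eq hℓ (by simpa using hv)).symm)

theorem freeSmallValues_congr {ℓ : Fin k} (h : AgreeOn π π' ℓ (ℓ - 1)) :
    freeSmallValues π ℓ = freeSmallValues π' ℓ := by
  ext v
  simp only [freeSmallValues, mem_filter, mem_univ, true_and, and_congr_right_iff]
  intro hv
  constructor <;> intro hle <;> by_contra hlt <;> rw [not_le] at hlt
  · rw [h.symm.symm_apply_eq hlt (by omega)] at hle
    exact hle.not_gt hlt
  · rw [h.symm_apply_eq hlt (by omega)] at hle
    exact hle.not_gt hlt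

theorem activeSet_congr {j : Fin k} (h : AgreeOn π π' (j + 1) (j - 1)) :
    activeSet π j = activeSet π' j := by
  ext ℓ
  simp only [activeSet, mem_filter, mem_univ, true_and, and_congr_right_iff, Fin.le_def]
  intro hℓ
  constructor <;> intro hle <;> by_contra hlt
  · have := h.symm.apply_eq (ℓ := ℓ) (by omega) (by omega)
    omega
  · have := h.apply_eq (ℓ := ℓ) (by omega) (by omega)
    omega

theorem apply_eq_of_valueRank_eq {ℓ : Fin k} (hS : freeSmallValues π ℓ = freeSmallValues π' ℓ)
    (hc : valueRank π ℓ = valueRank π' ℓ) (hsmall : (π ℓ : ℕ) + 1 < ℓ) : π ℓ = π' ℓ := by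
  have mem_self {σ : Equiv.Perm (Fin k)} (hσ : (σ ℓ : ℕ) + 1 < ℓ) : σ ℓ ∈ freeSmallValues σ ℓ := by
    simp [freeSmallValues, hσ]
  unfold valueRank at hc
  rw [← hS] at hc
  refine eq_of_card_filter_lt_eq (mem_self hsmall) (fun hlt => hS ▸ mem_self ?_) hc
  rw [Fin.lt_def] at hlt
  omega

theorem positionRank_eq {j ℓ : Fin k} (hv : (π ℓ : ℕ) + 1 = j) :
    positionRank π j = #{m ∈ activeSet π j | m < ℓ} := by
  refine congrArg card (filter_congr fun m _ => ⟨fun hm => hm ℓ hv, fun hm p hp => ?_⟩)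
  rwa [π.injective (Fin.ext (by omega : (π p : ℕ) = π ℓ))]

theorem apply_eq_of_positionRank_eq {j ℓ : Fin k} (hA : activeSet π j = activeSet π' j)
    (hc : positionRank π j = positionRank π' j) (hℓ : ℓ ≤ j) (hv : (π ℓ : ℕ) + 1 = j) :
    π' ℓ = π ℓ := by
  set ℓ' := π'.symm (π ℓ)
  have hv' : (π' ℓ' : ℕ) + 1 = j := by simpa [ℓ'] using hv
  have mem_active {σ : Equiv.Perm (Fin k)} {m : Fin k} (hm : m ≤ j) (hσ : (σ m : ℕ) + 1 = j) :
      m ∈ activeSet σ j := by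
    simp [activeSet, hm, hσ]
  rw [positionRank_eq hv, positionRank_eq hv', ← hA] at hc
  have := eq_of_card_filter_lt_eq (mem_active hℓ hv)
    (fun hlt => hA ▸ mem_active (hlt.le.trans hℓ) hv') hc
  simpa [ℓ'] using congrArg π' this

theorem AgreeOn.succ_row (h1 : ∀ ℓ, valueRank π ℓ = valueRank π' ℓ)
    (h : AgreeOn π π' (n + 1) n) : AgreeOn π π' (n + 2) n := by
  intro ℓ v hℓ hv
  rcases Nat.lt_or_ge ℓ (n + 1) with hlt | hge
  · exact h ℓ v hlt hv
  have hS : freeSmallValues π ℓ = freeSmallValues π' ℓ :=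
    freeSmallValues_congr (by rwa [show (ℓ : ℕ) = n + 1 by omega])
  constructor <;> rintro rfl
  · exact (apply_eq_of_valueRank_eq hS (h1 ℓ) (by omega)).symm
  · exact (apply_eq_of_valueRank_eq hS.symm (h1 ℓ).symm (by omega)).symm

theorem AgreeOn.succ_of_le (h : AgreeOn π π' a b) (hb : k ≤ b + 1) : AgreeOn π π' a (b + 1) := by
  have last {σ σ' : Equiv.Perm (Fin k)} (h : AgreeOn σ σ' a b) {ℓ v : Fin k} (hℓ : (ℓ : ℕ) < a)
      (hv : (v : ℕ) = b) (hσ : σ ℓ = v) : σ' ℓ = v := by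
    by_contra hne
    have hlt : (σ' ℓ : ℕ) < b := by
      have := (σ' ℓ).isLt
      have : (σ' ℓ : ℕ) ≠ v := fun h => hne (Fin.ext h)
      omega
    exact hne (h.symm.apply_eq hℓ hlt ▸ hσ)
  intro ℓ v hℓ hv
  rcases Nat.lt_or_ge v b with hlt | hge
  · exact h ℓ v hℓ hlt
  have hvb : (v : ℕ) = b := by omega
  exact ⟨last h hℓ hvb, last h.symm hℓ hvb⟩

theorem AgreeOn.succ_column (h2 : ∀ j, positionRank π j = positionRank π' j)
    (h : AgreeOn π π' (n + 2) n) : AgreeOn π π' (n + 2) (n + 1) := by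
  by_cases hn : n + 1 < k
  · let j : Fin k := ⟨n + 1, hn⟩
    have hA : activeSet π j = activeSet π' j := activeSet_congr h
    intro ℓ v hℓ hv
    rcases Nat.lt_or_ge v n with hlt | hge
    · exact h ℓ v hℓ hlt
    have hℓj : ℓ ≤ j := Fin.le_def.2 (by simp only [j]; omega)
    constructor <;> rintro rfl
    · exact apply_eq_of_positionRank_eq hA (h2 j) hℓj (by simp only [j]; omega)
    · exact apply_eq_of_positionRank_eq hA.symm (h2 j).symm hℓj (by simp only [j]; omega)
  · exact h.succ_of_le (by omega)

theorem eq_of_valueRank_positionRank_eq (h1 : ∀ ℓ, valueRank π ℓ = valueRank π' ℓ)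
    (h2 : ∀ j, positionRank π j = positionRank π' j) : π = π' := by
  have agree (n : ℕ) : AgreeOn π π' (n + 1) n := by
    induction n with
    | zero => intro ℓ v _ hv; omega
    | succ n ih => exact (ih.succ_row h1).succ_column h2
  exact Equiv.ext fun ℓ => ((agree k).apply_eq (by omega) (π ℓ).isLt).symm

end ProperPerm

open ProperPerm in
theorem natCard_isProperPerm_le (r k : ℕ) :
    Nat.card {π : Equiv.Perm (Fin k) // IsProperPerm r k π} ≤ (r * (r + 1)) ^ k := by
  let code (π : {π : Equiv.Perm (Fin k) // IsProperPerm r k π}) (j : Fin k) : Fin r × Fin (r + 1) :=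
    (⟨_, valueRank_lt π.2 j⟩, ⟨_, Nat.lt_succ_of_le (positionRank_le π.2 j)⟩)
  have hcode : Function.Injective code := fun π π' h => Subtype.ext <|
    eq_of_valueRank_positionRank_eq (fun ℓ => congrArg (Fin.val ∘ Prod.fst) (congrFun h ℓ))
      (fun j => congrArg (Fin.val ∘ Prod.snd) (congrFun h j))
  calc Nat.card {π : Equiv.Perm (Fin k) // IsProperPerm r k π}
      ≤ Nat.card (Fin k → Fin r × Fin (r + 1)) := Nat.card_le_card_of_injective code hcode
    _ = (r * (r + 1)) ^ k := by simp

theorem mul_succ_pow_le_two_rpow (r k : ℕ) :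
    ((r * (r + 1)) ^ k : ℝ) ≤ 2 ^ ((r + Real.logb 2 r) * k) := by
  have hbase : (r * (r + 1) : ℝ) ≤ 2 ^ ((r : ℝ) + Real.logb 2 r) := by
    rcases Nat.eq_zero_or_pos r with rfl | hr
    · simp only [CharP.cast_eq_zero, zero_mul]
      positivity
    rw [Real.rpow_add two_pos, Real.rpow_logb two_pos (by norm_num) (by exact_mod_cast hr),
      Real.rpow_natCast, mul_comm]
    gcongr
    exact_mod_cast Nat.lt_two_pow_self
  calc ((r * (r + 1)) ^ k : ℝ) ≤ (2 ^ ((r : ℝ) + Real.logb 2 r)) ^ k :=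
        pow_le_pow_left₀ (by positivity) hbase k
    _ = 2 ^ ((r + Real.logb 2 r) * k) := by
        rw [← Real.rpow_natCast, ← Real.rpow_mul zero_le_two]

theorem count_proper_permutations_general (r k : ℕ) :
    (Nat.card {π : Equiv.Perm (Fin k) // IsProperPerm r k π} : ℝ) ≤
      2 ^ (((r : ℝ) + Real.logb 2 r) * k) :=
  calc (Nat.card {π : Equiv.Perm (Fin k) // IsProperPerm r k π} : ℝ)
      ≤ ((r * (r + 1)) ^ k : ℕ) := by exact_mod_cast natCard_isProperPerm_le r k
    _ ≤ 2 ^ (((r : ℝ) + Real.logb 2 r) * k) := by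
        push_cast
        exact mul_succ_pow_le_two_rpow r k

/-- The number of `r`-proper permutations of `[k]` is at most `2 ^ ((r + log₂ r) k)`. -/
theorem count_proper_permutations (r k : ℕ) (hr : 1 ≤ r) (hk : 1 ≤ k) :
    (Nat.card {π : Equiv.Perm (Fin k) // IsProperPerm r k π} : ℝ) ≤
      2 ^ (((r : ℝ) + Real.logb 2 r) * k) :=
  count_proper_permutations_general r k
end

section
/- Let r, k ≥ 1 be natural numbers. For an r-proper permutation π : [k] → [k], its proper restriction is the restriction of π to the set B_π = {i ∈ [k] : π(i) ≥ i}. The number of distinct functions ρ : B → [k] (with B ⊆ [k]) that arise as the proper restriction of some r-proper permutation of [k] is at most 2^{r·k}. -/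
/-- The proper restriction of a permutation `π` of `[k]`: the restriction of `π` to its
set of bad indices `B_π = {i : π(i) ≥ i}`, modelled as a partial function
`Fin k → Option (Fin k)` that is `some (π i)` exactly on the bad indices. -/
def properRestriction (k : ℕ) (π : Equiv.Perm (Fin k)) : Fin k → Option (Fin k) :=
  fun i => if (i : ℕ) ≤ (π i : ℕ) then some (π i) else none

/-!
Scan `π` in stages `j = 0, 1, …, k`. The active set at stage `j` consists of the `ℓ ≤ j` with
`π ℓ + 1 ≥ j`, so `r`-properness says exactly that the active sets at stages `j < k` have at
most `r` elements. Passing from stage `j` to `j + 1`, at most one element leaves (the one with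
`π ℓ + 1 = j`) and at most one enters (`j + 1` itself), so the whole sequence of active sets is
recorded by `k` transition codes: an entry flag and the rank of the leaving element in the
current active set. That sequence determines the proper restriction, because a bad index `ℓ`
leaves exactly at stage `π ℓ + 1`. This gives at most `(2 (r + 1)) ^ k ≤ 2 ^ (r k)` restrictions
for `r ≥ 3`. For `r = 2`, pigeonhole makes every active set after the first have two elements,
so an element can only leave when another enters and only `4 = 2 ^ 2` codes occur; for `r = 1`
no permutation of `[k]` with `k ≥ 2` is proper.
-/

open Finset Equiv

section Rank

variable {α : Type*} [LinearOrder α]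

def rank (s : Finset α) (x : α) : ℕ := #{y ∈ s | y < x}

lemma rank_lt_card {s : Finset α} {x : α} (hx : x ∈ s) : rank s x < #s :=
  card_lt_card <| filter_ssubset.2 ⟨x, hx, lt_irrefl x⟩

lemma rank_strictMonoOn (s : Finset α) : StrictMonoOn (rank s) s := fun x hx y _ hxy => by
  apply card_lt_card
  rw [ssubset_iff_of_subset (monotone_filter_right s fun _ _ h => h.trans hxy)]
  exact ⟨x, mem_filter.2 ⟨hx, hxy⟩, by simp⟩

end Rank

variable {r k : ℕ}

def activeSet (π : Perm (Fin k)) (j : ℕ) : Finset (Fin k) :=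
  {ℓ | (ℓ : ℕ) ≤ j ∧ j ≤ (π ℓ : ℕ) + 1}

def exitSet (π : Perm (Fin k)) (j : ℕ) : Finset (Fin k) :=
  activeSet π j \ activeSet π (j + 1)

section Stages

variable (π : Perm (Fin k)) {j : ℕ} {ℓ : Fin k}

lemma mem_activeSet : ℓ ∈ activeSet π j ↔ (ℓ : ℕ) ≤ j ∧ j ≤ (π ℓ : ℕ) + 1 := by
  simp [activeSet]

lemma mem_exitSet : ℓ ∈ exitSet π j ↔ (ℓ : ℕ) ≤ j ∧ (π ℓ : ℕ) + 1 = j := by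
  simp only [exitSet, mem_sdiff, mem_activeSet]
  omega

lemma activeSet_eq_empty (hj : k < j) : activeSet π j = ∅ := by
  ext ℓ
  simp only [mem_activeSet, notMem_empty, iff_false]
  have := (π ℓ).isLt
  omega

lemma mem_activeSet_succ (hℓ : (ℓ : ℕ) ≠ j + 1) :
    ℓ ∈ activeSet π (j + 1) ↔ ℓ ∈ activeSet π j ∧ ℓ ∉ exitSet π j := by
  simp only [mem_exitSet, mem_activeSet]
  omega

lemma card_exitSet_le_one : #(exitSet π j) ≤ 1 :=
  card_le_one.2 fun a ha b hb => by
    rw [mem_exitSet] at ha hb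
    exact π.injective (Fin.ext (by omega))

lemma card_activeSet_le (h : IsProperPerm r k π) (hj : j < k) : #(activeSet π j) ≤ r := by
  convert h ⟨j, hj⟩ using 2
  ext ℓ
  simp [mem_activeSet, Fin.le_def]

/-- Pigeonhole: of the `j + 1` indices `ℓ ≤ j`, at most `j - 1` have `π ℓ < j - 1`. -/
lemma two_le_card_activeSet (hj : 1 ≤ j) (hjk : j < k) : 2 ≤ #(activeSet π j) := by
  have hcover : Iic (⟨j, hjk⟩ : Fin k) ⊆
      activeSet π j ∪ (Iio (⟨j - 1, by omega⟩ : Fin k)).image π.symm := by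
    intro ℓ hℓ
    rw [mem_union, mem_activeSet, mem_image]
    simp only [mem_Iic, Fin.le_def] at hℓ
    by_cases h : j ≤ (π ℓ : ℕ) + 1
    · exact Or.inl ⟨hℓ, h⟩
    · refine Or.inr ⟨π ℓ, ?_, π.symm_apply_apply ℓ⟩
      simp only [mem_Iio, Fin.lt_def]
      omega
  have hle := (card_le_card hcover).trans
    ((card_union_le _ _).trans (add_le_add_right card_image_le _))
  simp only [Fin.card_Iic, Fin.card_Iio] at hle
  omega

lemma two_le_of_isProperPerm (h : IsProperPerm r k π) (hk : 2 ≤ k) : 2 ≤ r :=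
  (two_le_card_activeSet π le_rfl hk).trans (card_activeSet_le π h hk)

end Stages

/-- The entry flag is vacuously `true` at the last stage `j = k - 1`, so that for `r = 2` an exit
is always paired with an entry. The leaving element is recorded by its rank in the active set. -/
def stageCode (π : Perm (Fin k)) (j : ℕ) : Bool × Finset ℕ :=
  (decide (∀ x : Fin k, (x : ℕ) = j + 1 → j ≤ (π x : ℕ)),
    (exitSet π j).image (rank (activeSet π j)))

lemma stageCode_fst_iff (π : Perm (Fin k)) {j : ℕ} {ℓ : Fin k} (hℓ : (ℓ : ℕ) = j + 1) :
    (stageCode π j).1 ↔ ℓ ∈ activeSet π (j + 1) := by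
  simp only [stageCode, decide_eq_true_eq, mem_activeSet]
  constructor
  · intro h
    have := h ℓ hℓ
    omega
  · rintro h x hx
    obtain rfl : x = ℓ := Fin.ext (hx.trans hℓ.symm)
    omega

section Injectivity

variable {π₁ π₂ : Perm (Fin k)} {j : ℕ}

lemma exitSet_eq_of_stageCode_eq (hF : activeSet π₁ j = activeSet π₂ j)
    (hc : stageCode π₁ j = stageCode π₂ j) : exitSet π₁ j = exitSet π₂ j := by
  have himage := congrArg Prod.snd hc
  simp only [stageCode, ← hF] at himage
  have hsub : exitSet π₂ j ⊆ activeSet π₁ j := hF ▸ sdiff_subset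
  exact_mod_cast ((rank_strictMonoOn _).injOn.image_eq_image_iff (coe_subset.2 sdiff_subset)
    (coe_subset.2 hsub)).1 (by exact_mod_cast himage)

lemma activeSet_succ_eq_of_stageCode_eq (hF : activeSet π₁ j = activeSet π₂ j)
    (hc : stageCode π₁ j = stageCode π₂ j) : activeSet π₁ (j + 1) = activeSet π₂ (j + 1) := by
  have hE := exitSet_eq_of_stageCode_eq hF hc
  ext ℓ
  by_cases hℓ : (ℓ : ℕ) = j + 1
  · rw [← stageCode_fst_iff π₁ hℓ, ← stageCode_fst_iff π₂ hℓ, hc]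
  · rw [mem_activeSet_succ π₁ hℓ, mem_activeSet_succ π₂ hℓ, hF, hE]

lemma activeSet_eq_of_stageCode_eq (hc : ∀ j < k, stageCode π₁ j = stageCode π₂ j) (j : ℕ) :
    activeSet π₁ j = activeSet π₂ j := by
  induction j with
  | zero => ext ℓ; simp [mem_activeSet]
  | succ j ih =>
    rcases lt_or_ge j k with hj | hj
    · exact activeSet_succ_eq_of_stageCode_eq ih (hc j hj)
    · rw [activeSet_eq_empty π₁ (by omega), activeSet_eq_empty π₂ (by omega)]

lemma properRestriction_eq_some_iff {π : Perm (Fin k)} {ℓ v : Fin k} :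
    properRestriction k π ℓ = some v ↔ (ℓ : ℕ) ≤ v ∧ ℓ ∈ exitSet π (v + 1) := by
  simp only [properRestriction, mem_exitSet]
  split_ifs <;> simp <;> omega

lemma properRestriction_eq_of_stageCode_eq (hc : ∀ j < k, stageCode π₁ j = stageCode π₂ j) :
    properRestriction k π₁ = properRestriction k π₂ :=
  funext fun ℓ => Option.ext fun v => by
    simp only [properRestriction_eq_some_iff, exitSet, activeSet_eq_of_stageCode_eq hc]

end Injectivity

lemma card_properRestrictions_le (A : Finset (Bool × Finset ℕ))
    (hA : ∀ π, IsProperPerm r k π → ∀ j < k, stageCode π j ∈ A) :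
    Nat.card {ρ : Fin k → Option (Fin k) //
        ∃ π : Perm (Fin k), IsProperPerm r k π ∧ ρ = properRestriction k π} ≤ #A ^ k := by
  let code : {ρ // ∃ π, IsProperPerm r k π ∧ ρ = properRestriction k π} →
      Fintype.piFinset fun _ : Fin k => A := fun ρ =>
    ⟨fun j => stageCode ρ.2.choose j, Fintype.mem_piFinset.2 fun j => hA _ ρ.2.choose_spec.1 j j.2⟩
  have hcode : Function.Injective code := by
    rintro ⟨ρ₁, h₁⟩ ⟨ρ₂, h₂⟩ heq
    rw [Subtype.mk.injEq, h₁.choose_spec.2, h₂.choose_spec.2]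
    exact properRestriction_eq_of_stageCode_eq fun j hj =>
      congrFun (congrArg Subtype.val heq) ⟨j, hj⟩
  calc _ ≤ Nat.card (Fintype.piFinset fun _ : Fin k => A) :=
        Nat.card_le_card_of_injective code hcode
    _ = #A ^ k := by rw [Nat.card_eq_finsetCard, Fintype.card_piFinset]; simp

def stageCodes (r : ℕ) : Finset (Bool × Finset ℕ) :=
  univ ×ˢ insert ∅ ((range r).map ⟨singleton, singleton_injective⟩)

lemma card_stageCodes (r : ℕ) : #(stageCodes r) = 2 * (r + 1) := by
  simp [stageCodes]

lemma card_filter_stageCodes_two : #((stageCodes 2).filter fun c => c.2.Nonempty → c.1) = 4 := by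
  decide

lemma stageCode_mem {π : Perm (Fin k)} (h : IsProperPerm r k π) {j : ℕ} (hj : j < k) :
    stageCode π j ∈ stageCodes r := by
  have hrange : (exitSet π j).image (rank (activeSet π j)) ⊆ range r := fun n hn => by
    obtain ⟨x, hx, rfl⟩ := mem_image.1 hn
    exact mem_range.2 ((rank_lt_card (sdiff_subset hx)).trans_le (card_activeSet_le π h hj))
  have hcard : #((exitSet π j).image (rank (activeSet π j))) ≤ 1 :=
    card_image_le.trans (card_exitSet_le_one π)
  obtain ⟨n, hn⟩ := card_le_one_iff_subset_singleton.1 hcard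
  simp only [stageCode, stageCodes, mem_product, mem_univ, true_and, mem_insert, mem_map]
  rcases subset_singleton_iff.1 hn with he | he
  · exact Or.inl he
  · exact Or.inr ⟨n, hrange (he ▸ mem_singleton_self n), he.symm⟩

lemma stageCode_mem_of_isProperPerm_two {π : Perm (Fin k)} (h : IsProperPerm 2 k π) {j : ℕ}
    (hj : j < k) : stageCode π j ∈ (stageCodes 2).filter fun c => c.2.Nonempty → c.1 := by
  refine mem_filter.2 ⟨stageCode_mem h hj, fun hexit => ?_⟩
  simp only [stageCode, image_nonempty, decide_eq_true_eq] at hexit ⊢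
  intro x hx
  by_contra hlt
  have hsub : activeSet π (j + 1) ⊆ activeSet π j \ exitSet π j := fun ℓ hℓ => by
    have hℓx : (ℓ : ℕ) ≠ j + 1 := fun e => by
      obtain rfl : ℓ = x := Fin.ext (e.trans hx.symm)
      rw [mem_activeSet] at hℓ
      omega
    exact mem_sdiff.2 ((mem_activeSet_succ π hℓx).1 hℓ)
  have := card_le_card hsub
  have hEF : exitSet π j ⊆ activeSet π j := sdiff_subset
  rw [card_sdiff_of_subset hEF] at this
  have := hexit.card_pos
  have := card_activeSet_le π h hj
  have := two_le_card_activeSet π (j := j + 1) (by omega) (by omega)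
  omega

lemma two_mul_succ_le_two_pow {r : ℕ} (hr : 3 ≤ r) : 2 * (r + 1) ≤ 2 ^ r := by
  induction r, hr using Nat.le_induction with
  | base => norm_num
  | succ n _ ih => rw [pow_succ]; omega

theorem count_proper_restrictions_general (r k : ℕ) (hr : 1 ≤ r) :
    Nat.card {ρ : Fin k → Option (Fin k) //
        ∃ π : Equiv.Perm (Fin k), IsProperPerm r k π ∧ ρ = properRestriction k π} ≤
      2 ^ (r * k) := by
  rcases le_or_gt k 1 with hk | hk
  · calc _ ≤ Nat.card (Fin k → Option (Fin k)) := Finite.card_subtype_le _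
      _ = (k + 1) ^ k := by simp
      _ ≤ 2 ^ (r * k) := by interval_cases k <;> simp [Nat.le_self_pow (by omega : r ≠ 0)]
  rcases isEmpty_or_nonempty {ρ : Fin k → Option (Fin k) //
      ∃ π : Equiv.Perm (Fin k), IsProperPerm r k π ∧ ρ = properRestriction k π} with
    hS | ⟨⟨_, π, hπ, -⟩⟩
  · simp
  obtain rfl | hr3 : r = 2 ∨ 3 ≤ r := by have := two_le_of_isProperPerm π hπ hk; omega
  · calc _ ≤ 4 ^ k := card_filter_stageCodes_two ▸
          card_properRestrictions_le _ fun _ hπ _ hj => stageCode_mem_of_isProperPerm_two hπ hj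
      _ = 2 ^ (2 * k) := by rw [pow_mul]; norm_num
  · calc _ ≤ (2 * (r + 1)) ^ k := card_stageCodes r ▸
          card_properRestrictions_le _ fun _ hπ _ hj => stageCode_mem hπ hj
      _ ≤ (2 ^ r) ^ k := Nat.pow_le_pow_left (two_mul_succ_le_two_pow hr3) k
      _ = 2 ^ (r * k) := (pow_mul 2 r k).symm

/-- The number of distinct functions arising as the proper restriction of some `r`-proper
permutation of `[k]` is at most `2 ^ (r k)`. -/
theorem count_proper_restrictions (r k : ℕ) (hr : 1 ≤ r) (hk : 1 ≤ k) :
    Nat.card {ρ : Fin k → Option (Fin k) //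
        ∃ π : Equiv.Perm (Fin k), IsProperPerm r k π ∧ ρ = properRestriction k π} ≤
      2 ^ (r * k) :=
  count_proper_restrictions_general r k hr
end

section
/- Let r, k ≥ 1 be natural numbers, let B ⊆ [k] and let ρ : B → [k] be a fixed function. Then the number of r-proper permutations π : [k] → [k] whose set of bad indices {i ∈ [k] : π(i) ≥ i} equals B and which satisfy π(i) = ρ(i) for every i ∈ B is at most r^k. -/
/-!
Encode `π` by `i ↦` the rank of `π i` among the values not taken by `π` before `i`. Reading
positions from left to right, this code together with `π` on `B` recovers `π`. Off `B` we
have `π i < i`, and properness at position `π i + 1` forces the rank to be `< r`, so the code is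
an injection into `[r]^k`.
-/

open Finset Equiv

lemma Finset.strictMonoOn_card_filter_lt {α : Type*} [LinearOrder α] (U : Finset α) :
    StrictMonoOn (fun a => #{u ∈ U | u < a}) U := by
  intro a ha b _ hab
  refine card_lt_card ⟨fun u hu => ?_, fun hsub => ?_⟩
  · simp only [mem_filter] at hu ⊢
    exact ⟨hu.1, hu.2.trans hab⟩
  simpa using hsub (mem_filter.2 ⟨ha, hab⟩)

namespace Equiv.Perm

variable {k : ℕ}

def unusedValues (π : Perm (Fin k)) (i : Fin k) : Finset (Fin k) :=
  {u | ∀ ℓ < i, π ℓ ≠ u}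

/-- Equals the Lehmer code `#{j | i < j ∧ π j < π i}`, but is computed from `π` on `[0, i)`
only, which is what makes it decodable from left to right. -/
def unusedRank (π : Perm (Fin k)) (i : Fin k) : ℕ :=
  #{u ∈ unusedValues π i | u < π i}

lemma apply_mem_unusedValues (π : Perm (Fin k)) (i : Fin k) : π i ∈ unusedValues π i := by
  simp only [unusedValues, mem_filter, mem_univ, true_and]
  exact fun ℓ hℓ h => hℓ.ne (π.injective h)

lemma unusedValues_congr {π σ : Perm (Fin k)} {i : Fin k} (h : ∀ ℓ < i, π ℓ = σ ℓ) :
    unusedValues π i = unusedValues σ i :=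
  filter_congr fun u _ => forall₂_congr fun ℓ hℓ => by rw [h ℓ hℓ]

lemma apply_eq_of_unusedRank_eq {π σ : Perm (Fin k)} {i : Fin k} (h : ∀ ℓ < i, π ℓ = σ ℓ)
    (hrank : unusedRank π i = unusedRank σ i) : π i = σ i := by
  have hσ := apply_mem_unusedValues σ i
  rw [← unusedValues_congr h] at hσ
  refine (strictMonoOn_card_filter_lt _).injOn (apply_mem_unusedValues π i) hσ ?_
  simpa only [unusedRank, unusedValues_congr h] using hrank

lemma eq_of_unusedRank_eq {π σ : Perm (Fin k)} (B : Finset (Fin k)) (hB : ∀ i ∈ B, π i = σ i)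
    (hrank : ∀ i ∉ B, unusedRank π i = unusedRank σ i) : π = σ := by
  ext i
  induction i using WellFoundedLT.induction with
  | _ i ih =>
    by_cases hi : i ∈ B
    · rw [hB i hi]
    · exact congrArg Fin.val (apply_eq_of_unusedRank_eq (fun ℓ hℓ => Fin.ext (ih ℓ hℓ))
        (hrank i hi))

/-- The values below `π i` are those taken before `i` and those still unused at `i`. -/
lemma card_filter_lt_add_unusedRank (π : Perm (Fin k)) (i : Fin k) :
    #{ℓ | ℓ < i ∧ π ℓ < π i} + unusedRank π i = π i := by
  have hused : #{ℓ | ℓ < i ∧ π ℓ < π i} = #{u ∈ Iio (π i) | ¬ ∀ ℓ < i, π ℓ ≠ u} := by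
    rw [← card_image_of_injective _ π.injective]
    congr 1
    ext u
    simp only [mem_image, mem_filter, mem_univ, true_and, mem_Iio, not_forall, not_not]
    constructor
    · rintro ⟨ℓ, ⟨hℓ, hlt⟩, rfl⟩
      exact ⟨hlt, ℓ, hℓ, rfl⟩
    · rintro ⟨hlt, ℓ, hℓ, rfl⟩
      exact ⟨ℓ, ⟨hℓ, hlt⟩, rfl⟩
  have hunused : unusedRank π i = #{u ∈ Iio (π i) | ∀ ℓ < i, π ℓ ≠ u} := by
    simp only [unusedRank, unusedValues, filter_filter]
    congr 1
    ext u
    simp [and_comm]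
  rw [hused, hunused, add_comm, card_filter_add_card_filter_not, Fin.card_Iio]

/-- Apply properness at position `π i + 1 ≤ i`: among its `π i + 2` predecessors at most `r`
have values `≥ π i`, and the others lie before `i` with values `< π i`. -/
lemma unusedRank_lt_of_isProperPerm {r : ℕ} {π : Perm (Fin k)} (hπ : IsProperPerm r k π)
    {i : Fin k} (hi : π i < i) : unusedRank π i < r := by
  obtain ⟨j, hj⟩ : ∃ j : Fin k, (j : ℕ) = π i + 1 := ⟨⟨π i + 1, by omega⟩, rfl⟩
  have hsplit := card_filter_add_card_filter_not (s := Iic j) fun ℓ => π ℓ < π i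
  have hlow : #{ℓ ∈ Iic j | π ℓ < π i} ≤ #{ℓ | ℓ < i ∧ π ℓ < π i} := by
    refine card_le_card fun ℓ => ?_
    simp only [mem_filter, mem_Iic, mem_univ, true_and]
    rintro ⟨hℓj, hℓ⟩
    refine ⟨lt_of_le_of_ne (by omega) ?_, hℓ⟩
    rintro rfl
    exact hℓ.false
  have hhigh : #{ℓ ∈ Iic j | ¬ π ℓ < π i} ≤ r := by
    refine (card_le_card fun ℓ => ?_).trans (hπ j)
    simp only [mem_filter, mem_Iic, mem_univ, true_and]
    omega
  have := card_filter_lt_add_unusedRank π i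
  rw [Fin.card_Iic] at hsplit
  omega

end Equiv.Perm

theorem count_proper_permutations_with_restriction_general (r k : ℕ) (hr : 1 ≤ r)
    (B : Finset (Fin k)) (ρ : {i : Fin k // i ∈ B} → Fin k) :
    Nat.card {π : Equiv.Perm (Fin k) //
        IsProperPerm r k π ∧ (∀ i : Fin k, ((i : ℕ) ≤ (π i : ℕ) ↔ i ∈ B)) ∧
        (∀ i : {i : Fin k // i ∈ B}, π i.1 = ρ i)} ≤
      r ^ k := by
  have : NeZero r := ⟨by omega⟩
  -- off `B` the unused rank is `< r`, so reducing it mod `r` loses nothing there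
  let code (π : Perm (Fin k)) (i : Fin k) : Fin r := Fin.ofNat r (π.unusedRank i)
  refine (Nat.card_le_card_of_injective (fun π => code π.1) ?_).trans (by simp)
  rintro ⟨π, hπ, hπB, hπρ⟩ ⟨σ, hσ, hσB, hσρ⟩ h
  refine Subtype.ext (Perm.eq_of_unusedRank_eq B (fun i hi => ?_) fun i hi => ?_)
  · rw [hπρ ⟨i, hi⟩, hσρ ⟨i, hi⟩]
  · have hi' := congrArg Fin.val (congrFun h i)
    simp only [code, Fin.val_ofNat] at hi'
    rwa [Nat.mod_eq_of_lt (Perm.unusedRank_lt_of_isProperPerm hπ (not_le.1 (mt (hπB i).1 hi))),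
      Nat.mod_eq_of_lt (Perm.unusedRank_lt_of_isProperPerm hσ (not_le.1 (mt (hσB i).1 hi)))] at hi'

/-- Given a fixed set `B ⊆ [k]` and a fixed function `ρ : B → [k]`, the number of
`r`-proper permutations of `[k]` whose set of bad indices `{i : π(i) ≥ i}` equals `B`
and which agree with `ρ` on `B` is at most `r ^ k`. -/
theorem count_proper_permutations_with_restriction (r k : ℕ) (hr : 1 ≤ r) (hk : 1 ≤ k)
    (B : Finset (Fin k)) (ρ : {i : Fin k // i ∈ B} → Fin k) :
    Nat.card {π : Equiv.Perm (Fin k) //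
        IsProperPerm r k π ∧ (∀ i : Fin k, ((i : ℕ) ≤ (π i : ℕ) ↔ i ∈ B)) ∧
        (∀ i : {i : Fin k // i ∈ B}, π i.1 = ρ i)} ≤
      r ^ k :=
  count_proper_permutations_with_restriction_general r k hr B ρ
end

section
/- Let t, k ≥ 1 be natural numbers and let π : [k] → [k] be a permutation such that for every i ∈ [k − t], either [i] ⊆ {π(1),…,π(i+t)} or {π(1),…,π(i)} ⊆ [i+t] (i.e. the ordering (π(1),…,π(k)) is t-close to the identity ordering). Then for every j ∈ [k], the number of indices ℓ ≤ j with π(ℓ) > j + t is at most t; consequently π is (2t+2)-proper. -/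
open Finset

/-- `t`-closeness of the ordering `(π 0, …, π (k - 1))` to the identity; the index `i` is the
paper's 1-based `i ∈ [k - t]`, so `(x : ℕ) < i` means `x ∈ [i]`. -/
def IsCloseToId (t : ℕ) {k : ℕ} (π : Equiv.Perm (Fin k)) : Prop :=
  ∀ i : ℕ, 1 ≤ i → i ≤ k - t →
    (∀ x : Fin k, (x : ℕ) < i → ∃ ℓ : Fin k, (ℓ : ℕ) < i + t ∧ π ℓ = x) ∨
    (∀ ℓ : Fin k, (ℓ : ℕ) < i → (π ℓ : ℕ) < i + t)

namespace Equiv.Perm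

variable {k : ℕ} (π : Equiv.Perm (Fin k))

theorem card_filter_apply_mem_Icc_le (a b : ℕ) :
    #{ℓ | a ≤ (π ℓ : ℕ) ∧ (π ℓ : ℕ) ≤ b} ≤ b + 1 - a := by
  rw [card_equiv (t := {x : Fin k | a ≤ (x : ℕ) ∧ (x : ℕ) ≤ b}) π fun ℓ => by simp]
  calc #{x : Fin k | a ≤ (x : ℕ) ∧ (x : ℕ) ≤ b}
      ≤ #(Icc a b) := card_le_card_of_injOn Fin.val (fun x hx => by simpa using hx)
        Fin.val_injective.injOn
    _ = b + 1 - a := Nat.card_Icc a b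

theorem card_filter_lt_add_and_le_apply_le {i t : ℕ}
    (hsurj : ∀ x : Fin k, (x : ℕ) < i → ∃ ℓ : Fin k, (ℓ : ℕ) < i + t ∧ π ℓ = x) :
    #{ℓ : Fin k | (ℓ : ℕ) < i + t ∧ i ≤ (π ℓ : ℕ)} ≤ t := by
  have hlow : #{ℓ : Fin k | (ℓ : ℕ) < i + t ∧ ¬ i ≤ (π ℓ : ℕ)} = min k i := by
    rw [← Fin.card_filter_val_lt]
    refine card_equiv π fun ℓ => ?_
    simp only [mem_filter, mem_univ, true_and, not_le]
    refine and_iff_right_of_imp fun hℓ => ?_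
    obtain ⟨ℓ', hℓ', hπ⟩ := hsurj (π ℓ) hℓ
    rwa [← π.injective hπ]
  have hsplit := card_filter_add_card_filter_not
    (s := {ℓ : Fin k | (ℓ : ℕ) < i + t}) (fun ℓ => i ≤ (π ℓ : ℕ))
  simp only [filter_filter, Fin.card_filter_val_lt] at hsplit
  omega

end Equiv.Perm

theorem IsCloseToId.card_filter_le_and_add_lt_apply_le {t k : ℕ} {π : Equiv.Perm (Fin k)}
    (hπ : IsCloseToId t π) (j : Fin k) :
    #{ℓ | ℓ ≤ j ∧ (j : ℕ) + t < (π ℓ : ℕ)} ≤ t := by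
  rcases (filter (fun ℓ : Fin k => ℓ ≤ j ∧ (j : ℕ) + t < (π ℓ : ℕ)) univ).eq_empty_or_nonempty
    with hS | ⟨ℓ₀, hℓ₀⟩
  · simp [hS]
  simp only [mem_filter, mem_univ, true_and, Fin.le_def] at hℓ₀
  have hjk : (j : ℕ) + 1 ≤ k - t := by have := (π ℓ₀).isLt; omega
  rcases hπ (j + 1) (by omega) hjk with hsurj | hinto
  · refine (card_le_card fun ℓ hℓ => ?_).trans (π.card_filter_lt_add_and_le_apply_le hsurj)
    simp only [mem_filter, mem_univ, true_and, Fin.le_def] at hℓ ⊢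
    omega
  · have := hinto ℓ₀ (by omega)
    omega

theorem isProperPerm_of_card_filter_le {t k : ℕ} {π : Equiv.Perm (Fin k)}
    (hfar : ∀ j : Fin k, #{ℓ | ℓ ≤ j ∧ (j : ℕ) + t < (π ℓ : ℕ)} ≤ t) :
    IsProperPerm (2 * t + 2) k π := by
  intro j
  have hnear := π.card_filter_apply_mem_Icc_le ((j : ℕ) - 1) ((j : ℕ) + t)
  calc #{ℓ | ℓ ≤ j ∧ (j : ℕ) ≤ (π ℓ : ℕ) + 1}
      ≤ #{ℓ | (ℓ ≤ j ∧ (j : ℕ) + t < (π ℓ : ℕ)) ∨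
          ((j : ℕ) - 1 ≤ (π ℓ : ℕ) ∧ (π ℓ : ℕ) ≤ (j : ℕ) + t)} :=
        card_le_card <| monotone_filter_right _ fun ℓ hℓ => by omega
    _ ≤ 2 * t + 2 := by
        rw [filter_or]
        exact (card_union_le _ _).trans (by have := hfar j; omega)

theorem t_close_implies_proper_general (t k : ℕ)
    (π : Equiv.Perm (Fin k))
    (hclose : ∀ i : ℕ, 1 ≤ i → i ≤ k - t →
      (∀ x : Fin k, (x : ℕ) < i → ∃ ℓ : Fin k, (ℓ : ℕ) < i + t ∧ π ℓ = x) ∨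
      (∀ ℓ : Fin k, (ℓ : ℕ) < i → (π ℓ : ℕ) < i + t)) :
    (∀ j : Fin k,
      (Finset.univ.filter fun ℓ : Fin k => ℓ ≤ j ∧ (j : ℕ) + t < (π ℓ : ℕ)).card ≤ t) ∧
    IsProperPerm (2 * t + 2) k π :=
  have hfar := IsCloseToId.card_filter_le_and_add_lt_apply_le (t := t) (π := π) hclose
  ⟨hfar, isProperPerm_of_card_filter_le hfar⟩

/-- If a permutation `π` of `[k]` is `t`-close to the identity ordering, i.e. for every
`i ∈ [k - t]` either `[i] ⊆ {π(1), …, π(i+t)}` or `{π(1), …, π(i)} ⊆ [i + t]`, then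
for every `j ∈ [k]` the number of indices `ℓ ≤ j` with `π(ℓ) > j + t` is at most `t`;
consequently `π` is `(2t + 2)`-proper. (Indices in `Fin k` are 0-based models of `[k]`:
`i : Fin k` represents `i + 1`.) -/
theorem t_close_implies_proper (t k : ℕ) (ht : 1 ≤ t) (hk : 1 ≤ k)
    (π : Equiv.Perm (Fin k))
    (hclose : ∀ i : ℕ, 1 ≤ i → i ≤ k - t →
      (∀ x : Fin k, (x : ℕ) < i → ∃ ℓ : Fin k, (ℓ : ℕ) < i + t ∧ π ℓ = x) ∨
      (∀ ℓ : Fin k, (ℓ : ℕ) < i → (π ℓ : ℕ) < i + t)) :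
    (∀ j : Fin k,
      (Finset.univ.filter fun ℓ : Fin k => ℓ ≤ j ∧ (j : ℕ) + t < (π ℓ : ℕ)).card ≤ t) ∧
    IsProperPerm (2 * t + 2) k π :=
  t_close_implies_proper_general t k π hclose
end

section
/- Let X be a finite set disjoint from [k], let t ≥ 1 with k ≥ t + 2, and let π : [k] → [k] be a permutation whose associated ordering τ = (π(1),…,π(k)) of [k] is not t-close to the identity ordering σ = (1,…,k). Let Z₀^σ ⊂ Z₁^σ ⊂ … ⊂ Z_k^σ be a [k]-chain in Q(X ∪ [k]) corresponding to σ, and Z₀^τ ⊂ Z₁^τ ⊂ … ⊂ Z_k^τ a [k]-chain corresponding to τ, with Z₀^σ = Z₀^τ and Z_k^σ = Z_k^τ. Then there exists an index i with 1 ≤ i < k − t such that the set {Z_j^σ, Z_j^τ : j ∈ {0, k} ∪ {i, i+1, …, i+t}} forms a copy of the subdivided diamond SD_{t,t} in Q(X ∪ [k]), with Z_j^σ incomparable to Z_{j'}^τ for all j, j' ∈ {i,…,i+t}. -/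
namespace SubdividedDiamond

variable {β : Type*} [Preorder β] {s t : ℕ}

def lift (b c : β) (f : Fin s → β) (g : Fin t → β) : SubdividedDiamond s t → β :=
  WithBot.recBotCoe b (WithTop.recTopCoe c (Sum.elim f g))

theorem exists_orderEmbedding {b c : β} {f : Fin s → β} {g : Fin t → β} (hbc : b < c)
    (hf : StrictMono f) (hg : StrictMono g) (hbf : ∀ m, b < f m) (hfc : ∀ m, f m < c)
    (hbg : ∀ m, b < g m) (hgc : ∀ m, g m < c) (hfg : ∀ m n, ¬ f m ≤ g n ∧ ¬ g n ≤ f m) :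
    ∃ φ : SubdividedDiamond s t ↪o β,
      Set.range φ ⊆ insert b (insert c (Set.range f ∪ Set.range g)) := by
  suffices (∀ x y, lift b c f g x ≤ lift b c f g y ↔ x ≤ y) ∧
      ∀ x, lift b c f g x ∈ insert b (insert c (Set.range f ∪ Set.range g)) from
    ⟨OrderEmbedding.ofMapLEIff _ this.1, Set.range_subset_iff.2 this.2⟩
  simp only [WithBot.forall, WithTop.forall, Sum.forall, lift, WithBot.recBotCoe_bot,
    WithBot.recBotCoe_coe, WithTop.recTopCoe_top, WithTop.recTopCoe_coe, Sum.elim_inl,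
    Sum.elim_inr]
  simp [hbc.le, hbc.not_ge, hf.le_iff_le, hg.le_iff_le, (hbf _).le, (hbf _).not_ge,
    (hfc _).le, (hfc _).not_ge, (hbg _).le, (hbg _).not_ge, (hgc _).le, (hgc _).not_ge,
    (hfg _ _).1, (hfg _ _).2]

theorem exists_orderEmbedding_of_chains {k a : ℕ} {Z Z' : Fin (k + 1) → β} (hZ : StrictMono Z)
    (hZ' : StrictMono Z') (hbot : Z 0 = Z' 0) (htop : Z (Fin.last k) = Z' (Fin.last k))
    (ha : 1 ≤ a) (hak : a + t ≤ k)
    (hinc : ∀ j j' : Fin (k + 1), a ≤ (j : ℕ) → (j : ℕ) < a + t → a ≤ (j' : ℕ) →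
      (j' : ℕ) < a + t → ¬ Z j ≤ Z' j' ∧ ¬ Z' j' ≤ Z j) :
    ∃ φ : SubdividedDiamond t t ↪o β, Set.range φ ⊆ {W | ∃ j : Fin (k + 1),
      ((j : ℕ) = 0 ∨ (j : ℕ) = k ∨ (a ≤ (j : ℕ) ∧ (j : ℕ) < a + t)) ∧ (W = Z j ∨ W = Z' j)} := by
  let idx : Fin t → Fin (k + 1) := fun m => ⟨a + m, by omega⟩
  have idx_strictMono : StrictMono idx := fun m n h => by simp [idx, Fin.lt_def, h]
  have idx_mem : ∀ m, a ≤ (idx m : ℕ) ∧ (idx m : ℕ) < a + t := fun m => by simp [idx]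
  have zero_lt_idx : ∀ m, 0 < idx m := fun m => by simp [idx, Fin.lt_def]; omega
  have idx_lt_last : ∀ m, idx m < Fin.last k := fun m => by simp [idx, Fin.lt_def]; omega
  obtain ⟨φ, hφ⟩ := exists_orderEmbedding
    (hZ (show (0 : Fin (k + 1)) < Fin.last k by simp [Fin.lt_def]; omega))
    (hZ.comp idx_strictMono) (hZ'.comp idx_strictMono)
    (fun m => hZ (zero_lt_idx m)) (fun m => hZ (idx_lt_last m))
    (fun m => hbot ▸ hZ' (zero_lt_idx m)) (fun m => htop ▸ hZ' (idx_lt_last m))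
    (fun m n => hinc (idx m) (idx n) (idx_mem m).1 (idx_mem m).2 (idx_mem n).1 (idx_mem n).2)
  refine ⟨φ, hφ.trans ?_⟩
  simp only [Set.insert_subset_iff, Set.union_subset_iff, Set.range_subset_iff, Set.mem_ofPred_eq]
  exact ⟨⟨0, by simp⟩, ⟨Fin.last k, by simp⟩,
    fun m => ⟨idx m, .inr (.inr (idx_mem m)), .inl rfl⟩,
    fun m => ⟨idx m, .inr (.inr (idx_mem m)), .inr rfl⟩⟩

end SubdividedDiamond

section PermChain

variable {α : Type*} [DecidableEq α] {k : ℕ}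

/-- The `[k]`-chain of the ordering `(e (π 0), …, e (π (k - 1)))`, with `X_i = S i`. -/
def permChain (e : Fin k ↪ α) (π : Equiv.Perm (Fin k)) (S : Fin (k + 1) → Finset α)
    (i : Fin (k + 1)) : Finset α :=
  S i ∪ (Finset.univ.filter fun ℓ : Fin k => (ℓ : ℕ) < (i : ℕ)).image (fun ℓ => e (π ℓ))

variable {e : Fin k ↪ α} {π : Equiv.Perm (Fin k)} {S : Fin (k + 1) → Finset α} {X : Finset α}

theorem mem_permChain_iff (hSX : ∀ i, S i ⊆ X) (heX : ∀ x, e x ∉ X) (x : Fin k)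
    (i : Fin (k + 1)) : e x ∈ permChain e π S i ↔ (π.symm x : ℕ) < i := by
  have hxS : e x ∉ S i := fun h => heX x (hSX i h)
  simp [permChain, hxS, ← Equiv.eq_symm_apply]

theorem permChain_mono (hS : Monotone S) : Monotone (permChain e π S) := fun _ _ hij =>
  Finset.union_subset_union (hS hij) <| Finset.image_subset_image fun _ => by
    simpa only [Finset.mem_filter, Finset.mem_univ, true_and] using fun h => h.trans_le hij

theorem permChain_strictMono (hS : Monotone S) (hSX : ∀ i, S i ⊆ X) (heX : ∀ x, e x ∉ X) :
    StrictMono (permChain e π S) := by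
  intro i j hij
  refine lt_of_le_not_ge (permChain_mono hS hij.le) fun hji => ?_
  have hi : (i : ℕ) < k := (Fin.lt_def.1 hij).trans_le (Fin.is_le j)
  have hmem : e (π ⟨i, hi⟩) ∈ permChain e π S j := by
    simpa [mem_permChain_iff hSX heX] using hij
  simpa [mem_permChain_iff hSX heX] using hji hmem

theorem not_permChain_subset_permChain {π' : Equiv.Perm (Fin k)} {T : Fin (k + 1) → Finset α}
    (hSX : ∀ i, S i ⊆ X) (hTX : ∀ i, T i ⊆ X) (heX : ∀ x, e x ∉ X) {x : Fin k}
    {j j' : Fin (k + 1)} (hxj : (π.symm x : ℕ) < j) (hxj' : (j' : ℕ) ≤ π'.symm x) :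
    ¬ permChain e π S j ⊆ permChain e π' T j' := fun h =>
  ((mem_permChain_iff hTX heX x j').1 (h ((mem_permChain_iff hSX heX x j).2 hxj))).not_ge hxj'

end PermChain

section TClose

variable {k : ℕ}

/-- `t`-closeness of `(π 0, …, π (k - 1))` to the identity ordering, shifted to `0`-based
indices: `[i] ⊆ {y₁, …, y_{i+t}}` or `{y₁, …, y_i} ⊆ [i + t]`. -/
def IsTClose (t : ℕ) (π : Equiv.Perm (Fin k)) : Prop :=
  ∀ i : ℕ, 1 ≤ i → i ≤ k - t →
    (∀ x : Fin k, (x : ℕ) < i → ∃ ℓ : Fin k, (ℓ : ℕ) < i + t ∧ π ℓ = x) ∨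
    (∀ ℓ : Fin k, (ℓ : ℕ) < i → (π ℓ : ℕ) < i + t)

theorem exists_witnesses_of_not_isTClose {t : ℕ} {π : Equiv.Perm (Fin k)}
    (h : ¬ IsTClose t π) :
    ∃ i : ℕ, 1 ≤ i ∧ i < k - t ∧ (∃ x : Fin k, (x : ℕ) < i ∧ i + t ≤ π.symm x) ∧
      ∃ ℓ : Fin k, (ℓ : ℕ) < i ∧ i + t ≤ π ℓ := by
  simp only [IsTClose, not_forall, not_or, not_exists, not_and, not_lt] at h
  obtain ⟨i, hi, hik, ⟨x, hxi, hx⟩, ℓ, hℓi, hℓ⟩ := h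
  have hx' : i + t ≤ π.symm x := not_lt.1 fun h' => hx _ h' (π.apply_symm_apply x)
  refine ⟨i, hi, hik.lt_of_ne ?_, ⟨x, hxi, hx'⟩, ℓ, hℓi, hℓ⟩
  rintro rfl
  have := (π.symm x).isLt
  omega

end TClose

theorem not_t_close_gives_subdivided_diamond_general {α : Type*} [DecidableEq α]
    (t k : ℕ)
    (X : Finset α) (e : Fin k ↪ α) (heX : ∀ i, e i ∉ X)
    (π : Equiv.Perm (Fin k))
    (hnotclose : ¬ ∀ i : ℕ, 1 ≤ i → i ≤ k - t →
      (∀ x : Fin k, (x : ℕ) < i → ∃ ℓ : Fin k, (ℓ : ℕ) < i + t ∧ π ℓ = x) ∨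
      (∀ ℓ : Fin k, (ℓ : ℕ) < i → (π ℓ : ℕ) < i + t))
    (S T : Fin (k + 1) → Finset α)
    (hS : Monotone S) (hSX : ∀ i, S i ⊆ X)
    (hT : Monotone T) (hTX : ∀ i, T i ⊆ X)
    (Zσ Zτ : Fin (k + 1) → Finset α)
    (hZσ : ∀ i, Zσ i =
      S i ∪ (Finset.univ.filter fun ℓ : Fin k => (ℓ : ℕ) < (i : ℕ)).image (fun ℓ => e ℓ))
    (hZτ : ∀ i, Zτ i =
      T i ∪ (Finset.univ.filter fun ℓ : Fin k => (ℓ : ℕ) < (i : ℕ)).image (fun ℓ => e (π ℓ)))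
    (hbot : Zσ 0 = Zτ 0) (htop : Zσ (Fin.last k) = Zτ (Fin.last k)) :
    ∃ i : ℕ, 1 ≤ i ∧ i < k - t ∧
      (∀ j j' : Fin (k + 1), i ≤ (j : ℕ) → (j : ℕ) ≤ i + t →
          i ≤ (j' : ℕ) → (j' : ℕ) ≤ i + t →
          ¬ Zσ j ⊆ Zτ j' ∧ ¬ Zτ j' ⊆ Zσ j) ∧
      (∃ f : SubdividedDiamond t t ↪o Finset α,
        Set.range f ⊆ {W : Finset α | ∃ j : Fin (k + 1),
          ((j : ℕ) = 0 ∨ (j : ℕ) = k ∨ (i ≤ (j : ℕ) ∧ (j : ℕ) ≤ i + t)) ∧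
          (W = Zσ j ∨ W = Zτ j)}) := by
  have hσ : Zσ = permChain e (Equiv.refl _) S := funext hZσ
  have hτ : Zτ = permChain e π T := funext hZτ
  obtain ⟨i, hi, hik, ⟨x, hxi, hx⟩, ℓ, hℓi, hℓ⟩ := exists_witnesses_of_not_isTClose hnotclose
  have hincomp : ∀ j j' : Fin (k + 1), i ≤ (j : ℕ) → (j : ℕ) ≤ i + t →
      i ≤ (j' : ℕ) → (j' : ℕ) ≤ i + t → ¬ Zσ j ⊆ Zτ j' ∧ ¬ Zτ j' ⊆ Zσ j := by
    intro j j' hij hji hij' hji'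
    subst hσ hτ
    exact ⟨not_permChain_subset_permChain hSX hTX heX (x := x) (by simp; omega) (by omega),
      not_permChain_subset_permChain hTX hSX heX (x := π ℓ) (by simp; omega) (by simp; omega)⟩
  refine ⟨i, hi, hik, hincomp, ?_⟩
  obtain ⟨φ, hφ⟩ := SubdividedDiamond.exists_orderEmbedding_of_chains (t := t) (a := i + 1)
    (hσ ▸ permChain_strictMono hS hSX heX) (hτ ▸ permChain_strictMono hT hTX heX) hbot htop
    (by omega) (by omega) fun j j' _ hj _ hj' =>
      hincomp j j' (by omega) (by omega) (by omega) (by omega)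
  refine ⟨φ, hφ.trans ?_⟩
  rintro W ⟨j, hj, hW⟩
  exact ⟨j, by omega, hW⟩

/-- Let `X` be a finite set disjoint from `[k]` (whose elements are embedded via `e`),
let `t ≥ 1`, `k ≥ t + 2`, and let `π` be a permutation of `[k]` whose ordering
`(π(1), …, π(k))` is *not* `t`-close to the identity ordering. Given a `[k]`-chain
`Zσ` corresponding to the identity ordering and a `[k]`-chain `Zτ` corresponding to
`(π(1), …, π(k))` (built from monotone families `S`, `T` of subsets of `X`), sharing
their smallest and largest elements, there is an index `i` with `1 ≤ i < k - t` such
that `Zσ j` and `Zτ j'` are incomparable for all `j, j' ∈ {i, …, i + t}`, and the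
collection `{Zσ j, Zτ j : j ∈ {0, k} ∪ {i, …, i + t}}` forms a copy of the subdivided
diamond `SD_{t,t}` in `Q(X ∪ [k])`. -/
theorem not_t_close_gives_subdivided_diamond {α : Type*} [DecidableEq α]
    (t k : ℕ) (ht : 1 ≤ t) (hk : t + 2 ≤ k)
    (X : Finset α) (e : Fin k ↪ α) (heX : ∀ i, e i ∉ X)
    (π : Equiv.Perm (Fin k))
    (hnotclose : ¬ ∀ i : ℕ, 1 ≤ i → i ≤ k - t →
      (∀ x : Fin k, (x : ℕ) < i → ∃ ℓ : Fin k, (ℓ : ℕ) < i + t ∧ π ℓ = x) ∨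
      (∀ ℓ : Fin k, (ℓ : ℕ) < i → (π ℓ : ℕ) < i + t))
    (S T : Fin (k + 1) → Finset α)
    (hS : Monotone S) (hSX : ∀ i, S i ⊆ X)
    (hT : Monotone T) (hTX : ∀ i, T i ⊆ X)
    (Zσ Zτ : Fin (k + 1) → Finset α)
    (hZσ : ∀ i, Zσ i =
      S i ∪ (Finset.univ.filter fun ℓ : Fin k => (ℓ : ℕ) < (i : ℕ)).image (fun ℓ => e ℓ))
    (hZτ : ∀ i, Zτ i =
      T i ∪ (Finset.univ.filter fun ℓ : Fin k => (ℓ : ℕ) < (i : ℕ)).image (fun ℓ => e (π ℓ)))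
    (hbot : Zσ 0 = Zτ 0) (htop : Zσ (Fin.last k) = Zτ (Fin.last k)) :
    ∃ i : ℕ, 1 ≤ i ∧ i < k - t ∧
      (∀ j j' : Fin (k + 1), i ≤ (j : ℕ) → (j : ℕ) ≤ i + t →
          i ≤ (j' : ℕ) → (j' : ℕ) ≤ i + t →
          ¬ Zσ j ⊆ Zτ j' ∧ ¬ Zτ j' ⊆ Zσ j) ∧
      (∃ f : SubdividedDiamond t t ↪o Finset α,
        Set.range f ⊆ {W : Finset α | ∃ j : Fin (k + 1),
          ((j : ℕ) = 0 ∨ (j : ℕ) = k ∨ (i ≤ (j : ℕ) ∧ (j : ℕ) ≤ i + t)) ∧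
          (W = Zσ j ∨ W = Zτ j)}) :=
  not_t_close_gives_subdivided_diamond_general t k X e heX π hnotclose S T hS hSX hT hTX Zσ Zτ hZσ
    hZτ hbot htop
end
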